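/- arXiv:1312.5674 — 5 statements merged into one kernel-verified Lean document; each statement's English description precedes it below -/
import Mathlib

section
/- Continuous Littlewood–Paley decomposition: let χ ∈ C^∞(ℝ^{n+d}) equal 1 in a neighborhood of I = {h=0} and 0 outside a larger neighborhood, and set ψ = −ρχ where ρ = h^j∂_{h^j}. Then for every distribution t and every test function φ vanishing in a neighborhood of I, ⟨t,φ⟩ = ∫₀¹ (dλ/λ) ⟨t ψ_{λ^{-1}}, φ⟩ + ⟨t(1−χ), φ⟩, where ψ_{λ^{-1}}(x,h) = ψ(x, h/λ) and the integrand vanishes for λ below a positive threshold. -/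
open Set MeasureTheory

noncomputable section

abbrev Pt (n d : ℕ) : Type := (Fin n → ℝ) × (Fin d → ℝ)

/-- `t` is a distribution: on each compact it has a finite order estimate. -/
def IsLocDistrib (n d : ℕ) (t : (Pt n d → ℝ) → ℝ) : Prop :=
  ∀ K : Set (Pt n d), IsCompact K → ∃ (C : ℝ) (k : ℕ),
    ∀ φ : Pt n d → ℝ, ContDiff ℝ (⊤ : ℕ∞) φ → tsupport φ ⊆ K →
      ∀ M : ℝ, (∀ i ≤ k, ∀ x, ‖iteratedFDeriv ℝ i φ x‖ ≤ M) → |t φ| ≤ C * M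

/-!
Write `χ_m (x, h) = χ (x, m • h)`. Since `χ` vanishes for `‖h‖ ≥ b` above the projection of
`supp φ` and `φ` vanishes for `‖h‖ ≤ δ`, the product `χ_{λ⁻¹} φ` is zero for `λ ≤ δ / b`.
A distribution of finite order `k` on `supp φ` can be differentiated under the pairing along
a smooth family of test functions supported there, because the difference quotients converge
in `C^k`, uniformly on the compact support. Euler's identity `ρχ (x, m • h) = m ∂ₘ χ (x, m • h)`
then gives `d/dλ ⟨t, χ_{λ⁻¹} φ⟩ = λ⁻¹ ⟨t, ψ_{λ⁻¹} φ⟩`, and the fundamental theorem of calculus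
on `(0, 1]` yields `⟨t, χ φ⟩ = ∫₀¹ λ⁻¹ ⟨t, ψ_{λ⁻¹} φ⟩ dλ`. The integrand vanishes for small `λ`
because it is the derivative of a function that vanishes there.
-/

open scoped ContDiff Topology

theorem ContinuousLinearMap.sum_mul_apply_zero_single {X ι : Type*} [NormedAddCommGroup X]
    [NormedSpace ℝ X] [Fintype ι] [DecidableEq ι] (L : X × (ι → ℝ) →L[ℝ] ℝ) (h : ι → ℝ) :
    ∑ j, h j * L (0, Pi.single j 1) = L (0, h) := by
  calc ∑ j, h j * L (0, Pi.single j 1) = L (∑ j, h j • ((0 : X), Pi.single j (1 : ℝ))) := by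
        simp only [map_sum, map_smul, smul_eq_mul]
    _ = L (0, h) := by
        congr 1
        ext j
        · simp [Prod.fst_sum]
        · simp [Prod.snd_sum, Finset.sum_apply, Pi.single_apply]

section Calculus

variable {𝕜 E F G : Type*} [RCLike 𝕜] [NormedAddCommGroup E] [NormedSpace 𝕜 E]
  [NormedAddCommGroup F] [NormedSpace 𝕜 F] [NormedAddCommGroup G] [NormedSpace 𝕜 G]

theorem ContDiff.fderiv_apply_const {f : E → F} (hf : ContDiff 𝕜 ∞ f) (v : E) :
    ContDiff 𝕜 ∞ fun x => fderiv 𝕜 f x v :=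
  (hf.fderiv_right (m := ∞) le_rfl).clm_apply contDiff_const

theorem ContDiff.fderiv_iteratedFDeriv_apply {f : E → F} (hf : ContDiff 𝕜 ∞ f) (v : E)
    (i : ℕ) (x : E) :
    fderiv 𝕜 (iteratedFDeriv 𝕜 i f) x v = iteratedFDeriv 𝕜 i (fun y => fderiv 𝕜 f y v) x := by
  induction i generalizing x with
  | zero =>
    ext m
    rw [iteratedFDeriv_zero_eq_comp, LinearIsometryEquiv.comp_fderiv]
    simp
  | succ i ih =>
    have hg : ContDiff 𝕜 ∞ (iteratedFDeriv 𝕜 i f) := hf.iteratedFDeriv_right le_rfl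
    -- Schwarz's theorem for the smooth function `iteratedFDeriv 𝕜 i f`
    have hsymm : fderiv 𝕜 (fderiv 𝕜 (iteratedFDeriv 𝕜 i f)) x v =
        fderiv 𝕜 (fun y => fderiv 𝕜 (iteratedFDeriv 𝕜 i f) y v) x := by
      ext w : 1
      rw [fderiv_clm_apply ((hg.fderiv_right (m := ∞) le_rfl).differentiable (by simp) x)
        (differentiableAt_const v)]
      simpa using hg.contDiffAt.isSymmSndFDerivAt (by simpa using ENat.LEInfty.out) v w
    have hcomp := LinearIsometryEquiv.comp_fderiv (𝕜 := 𝕜) (x := x)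
      (iso := (continuousMultilinearCurryLeftEquiv 𝕜 (fun _ : Fin (i + 1) => E) F).symm)
      (f := fderiv 𝕜 (iteratedFDeriv 𝕜 i f))
    rw [iteratedFDeriv_succ_eq_comp_left, iteratedFDeriv_succ_eq_comp_left, hcomp,
      show iteratedFDeriv 𝕜 i (fun y => fderiv 𝕜 f y v) = _ from (funext ih).symm]
    simp [hsymm]

theorem iteratedFDeriv_comp_prodMk_right {f : G × E → F} {i : ℕ} (hf : ContDiff 𝕜 i f)
    (a : G) (p : E) :
    iteratedFDeriv 𝕜 i (fun q => f (a, q)) p =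
      (iteratedFDeriv 𝕜 i f (a, p)).compContinuousLinearMap
        fun _ => ContinuousLinearMap.inr 𝕜 G E := by
  have hshift : (fun q => f (a, q)) =
      (fun y => f ((a, 0) + y)) ∘ ContinuousLinearMap.inr 𝕜 G E := by
    ext q; simp
  have hf' : ContDiff 𝕜 i fun y => f ((a, 0) + y) := hf.comp (contDiff_const.add contDiff_id)
  rw [hshift, ContinuousLinearMap.iteratedFDeriv_comp_right _ hf' _ le_rfl,
    iteratedFDeriv_comp_add_left]
  simp

theorem ContDiff.continuous_iteratedFDeriv_comp_prodMk_right {f : G × E → F} {i : ℕ}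
    (hf : ContDiff 𝕜 i f) :
    Continuous fun x : G × E => iteratedFDeriv 𝕜 i (fun q => f (x.1, q)) x.2 := by
  simp_rw [iteratedFDeriv_comp_prodMk_right hf]
  exact (ContinuousMultilinearMap.compContinuousLinearMapL _).continuous.comp
    (hf.continuous_iteratedFDeriv le_rfl)

theorem DifferentiableAt.hasDerivAt_comp_prodMk_left {f : 𝕜 × E → F} {s : 𝕜} {p : E}
    (hf : DifferentiableAt 𝕜 f (s, p)) :
    HasDerivAt (fun σ => f (σ, p)) (fderiv 𝕜 f (s, p) (1, 0)) s :=
  hf.hasFDerivAt.comp_hasDerivAt s ((hasDerivAt_id s).prodMk (hasDerivAt_const s p))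

theorem ContDiff.hasDerivAt_iteratedFDeriv_comp_prodMk_right {f : 𝕜 × E → F}
    (hf : ContDiff 𝕜 ∞ f) (i : ℕ) (s : 𝕜) (p : E) :
    HasDerivAt (fun σ => iteratedFDeriv 𝕜 i (fun q => f (σ, q)) p)
      (iteratedFDeriv 𝕜 i (fun q => fderiv 𝕜 f (s, q) (1, 0)) p) s := by
  have hi : (i : WithTop ℕ∞) ≤ ∞ := by exact_mod_cast le_top
  have hD : DifferentiableAt 𝕜 (iteratedFDeriv 𝕜 i f) (s, p) :=
    (hf.iteratedFDeriv_right (m := ∞) le_rfl).differentiable (by simp) _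
  simp_rw [iteratedFDeriv_comp_prodMk_right (hf.of_le hi),
    iteratedFDeriv_comp_prodMk_right ((hf.fderiv_apply_const (1, 0)).of_le hi),
    ← hf.fderiv_iteratedFDeriv_apply]
  let L := ContinuousMultilinearMap.compContinuousLinearMapL (F := F)
    fun _ : Fin i => ContinuousLinearMap.inr 𝕜 𝕜 E
  exact (L.hasFDerivAt (x := iteratedFDeriv 𝕜 i f (s, p))).comp_hasDerivAt s
    hD.hasDerivAt_comp_prodMk_left

end Calculus

theorem IsCompact.eventually_norm_sub_sub_smul_le {Y X : Type*} [TopologicalSpace Y]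
    [NormedAddCommGroup X] [NormedSpace ℝ X] {K : Set Y} (hK : IsCompact K) {g g' : ℝ → Y → X}
    (hg : ∀ s, ∀ y ∈ K, HasDerivAt (g · y) (g' s y) s)
    (hg' : ContinuousOn (Function.uncurry g') (univ ×ˢ K)) (r : ℝ) {ε : ℝ} (hε : 0 < ε) :
    ∀ᶠ s in 𝓝 r, ∀ y ∈ K, ‖g s y - g r y - (s - r) • g' r y‖ ≤ ε * |s - r| := by
  obtain ⟨v, hv, hvK⟩ :=
    hK.mem_uniformity_of_prod hg' (mem_univ r) (Metric.dist_mem_uniformity hε)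
  obtain ⟨δ, hδ, hball⟩ := Metric.mem_nhds_iff.1 (nhdsWithin_univ r ▸ hv)
  filter_upwards [Metric.ball_mem_nhds r hδ] with s hs y hy
  have hderiv (σ : ℝ) : HasDerivAt (fun σ => g σ y - σ • g' r y) (g' σ y - g' r y) σ :=
    (hg σ y hy).sub (by simpa using (hasDerivAt_id σ).smul_const (g' r y))
  have hclose (σ : ℝ) (hσ : σ ∈ Metric.ball r δ) : ‖g' σ y - g' r y‖ ≤ ε :=
    (by simpa [dist_eq_norm] using hvK σ (hball hσ) y hy : ‖g' σ y - g' r y‖ < ε).le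
  have hmvt := (convex_ball r δ).norm_image_sub_le_of_norm_hasDerivWithin_le
    (fun σ _ => (hderiv σ).hasDerivWithinAt) hclose (Metric.mem_ball_self hδ) hs
  calc ‖g s y - g r y - (s - r) • g' r y‖
      = ‖(g s y - s • g' r y) - (g r y - r • g' r y)‖ := by congr 1; module
    _ ≤ ε * |s - r| := by simpa [Real.norm_eq_abs] using hmvt

section Pairing

variable {E F : Type*} [NormedAddCommGroup E] [NormedSpace ℝ E] [NormedAddCommGroup F]
  [NormedSpace ℝ F]

theorem ContDiff.eventually_norm_iteratedFDeriv_sub_sub_smul_le {W : ℝ × E → F}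
    (hW : ContDiff ℝ ∞ W) {K : Set E} (hK : IsCompact K) (i : ℕ) (r : ℝ) {ε : ℝ} (hε : 0 < ε) :
    ∀ᶠ s in 𝓝 r, ∀ p ∈ K, ‖iteratedFDeriv ℝ i
      (fun q => W (s, q) - W (r, q) - (s - r) • fderiv ℝ W (r, q) (1, 0)) p‖ ≤ ε * |s - r| := by
  have hW' := hW.fderiv_apply_const (1, 0)
  have hi : (i : WithTop ℕ∞) ≤ ∞ := by exact_mod_cast le_top
  filter_upwards [hK.eventually_norm_sub_sub_smul_le
    (fun s p _ => hW.hasDerivAt_iteratedFDeriv_comp_prodMk_right i s p)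
    (hW'.of_le hi).continuous_iteratedFDeriv_comp_prodMk_right.continuousOn r hε]
    with s hs p hp
  have hslice {V : ℝ × E → F} (hV : ContDiff ℝ ∞ V) (s : ℝ) :
      ContDiffAt ℝ i (fun q => V (s, q)) p :=
    ((hV.of_le hi).comp (contDiff_prodMk_right s)).contDiffAt
  rw [fun_iteratedFDeriv_sub_apply ((hslice hW s).sub (hslice hW r))
      ((hslice hW' r).const_smul _),
    fun_iteratedFDeriv_sub_apply (hslice hW s) (hslice hW r),
    iteratedFDeriv_const_smul_apply' (hslice hW' r)]
  exact hs p hp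

theorem fderiv_eq_zero_of_snd_notMem {W : ℝ × E → F} {K : Set E} (hK : IsClosed K)
    (hWK : ∀ s, ∀ p ∉ K, W (s, p) = 0) (s : ℝ) {p : E} (hp : p ∉ K) :
    fderiv ℝ W (s, p) = 0 := by
  have hsupp : tsupport W ⊆ univ ×ˢ K := closure_minimal
    (fun x hx => ⟨trivial, by_contra fun hxK => hx (hWK x.1 x.2 hxK)⟩) (isClosed_univ.prod hK)
  exact fderiv_of_notMem_tsupport ℝ fun hsp => hp (hsupp hsp).2

-- `IsLocDistrib n d t` unfolds to `∀ K, IsCompact K → ∃ C k, HasOrderBound t K C k`.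
def HasOrderBound (t : (E → F) → ℝ) (K : Set E) (C : ℝ) (k : ℕ) : Prop :=
  ∀ φ : E → F, ContDiff ℝ ∞ φ → tsupport φ ⊆ K →
    ∀ M : ℝ, (∀ i ≤ k, ∀ x, ‖iteratedFDeriv ℝ i φ x‖ ≤ M) → |t φ| ≤ C * M

variable {t : (E → F) →ₗ[ℝ] ℝ} {K : Set E} {C : ℝ} {k : ℕ} {W : ℝ × E → F}

theorem hasDerivAt_pairing_of_hasOrderBound (hK : IsCompact K) (ht : HasOrderBound t K C k)
    (hW : ContDiff ℝ ∞ W) (hWK : ∀ s, ∀ p ∉ K, W (s, p) = 0) (r : ℝ) :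
    HasDerivAt (fun s => t fun p => W (s, p)) (t fun p => fderiv ℝ W (r, p) (1, 0)) r := by
  set Δ : ℝ → E → F := fun s p => W (s, p) - W (r, p) - (s - r) • fderiv ℝ W (r, p) (1, 0)
  have hΔ (s : ℝ) : ContDiff ℝ ∞ (Δ s) :=
    ((hW.comp (contDiff_prodMk_right s)).sub (hW.comp (contDiff_prodMk_right r))).sub
      (((hW.fderiv_apply_const (1, 0)).comp (contDiff_prodMk_right r)).const_smul (s - r))
  have hΔK (s : ℝ) : tsupport (Δ s) ⊆ K := closure_minimal (fun p hp => by_contra fun hpK =>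
      hp (by simp [Δ, hWK s p hpK, hWK r p hpK,
        fderiv_eq_zero_of_snd_notMem hK.isClosed hWK r hpK])) hK.isClosed
  rw [hasDerivAt_iff_isLittleO, Asymptotics.isLittleO_iff]
  intro ε hε
  have hε' : 0 < ε / (|C| + 1) := by positivity
  have hbound : ∀ᶠ s in 𝓝 r, ∀ i ∈ Iic k, ∀ p,
      ‖iteratedFDeriv ℝ i (Δ s) p‖ ≤ ε / (|C| + 1) * |s - r| := by
    refine (Filter.eventually_all_finite (finite_Iic k)).2 fun i _ => ?_
    filter_upwards [hW.eventually_norm_iteratedFDeriv_sub_sub_smul_le hK i r hε'] with s hs p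
    by_cases hp : p ∈ K
    · exact hs p hp
    · rw [Function.notMem_support.1 fun h => hp (hΔK s (support_iteratedFDeriv_subset i h)),
        norm_zero]
      positivity
  filter_upwards [hbound] with s hs
  have htΔ : t (Δ s) = (t fun p => W (s, p)) - (t fun p => W (r, p)) -
      (s - r) • t fun p => fderiv ℝ W (r, p) (1, 0) := by
    rw [← map_smul, ← map_sub, ← map_sub]; rfl
  calc _ = |t (Δ s)| := by rw [htΔ, Real.norm_eq_abs]
    _ ≤ C * (ε / (|C| + 1) * |s - r|) := ht _ (hΔ s) (hΔK s) _ hs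
    _ = C / (|C| + 1) * (ε * ‖s - r‖) := by rw [Real.norm_eq_abs]; ring
    _ ≤ ε * ‖s - r‖ := mul_le_of_le_one_left (by positivity)
      ((div_le_one (by positivity)).2 (by linarith [le_abs_self C]))

theorem continuous_pairing_fderiv_of_hasOrderBound (hK : IsCompact K)
    (ht : HasOrderBound t K C k) (hW : ContDiff ℝ ∞ W) (hWK : ∀ s, ∀ p ∉ K, W (s, p) = 0) :
    Continuous fun s => t fun p => fderiv ℝ W (s, p) (1, 0) :=
  continuous_iff_continuousAt.2 fun r =>
    (hasDerivAt_pairing_of_hasOrderBound hK ht (hW.fderiv_apply_const (1, 0))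
      (fun s p hp => by simp [fderiv_eq_zero_of_snd_notMem hK.isClosed hWK s hp])
      r).continuousAt

end Pairing

theorem HasDerivAt.eq_zero_of_eqOn_Ioc {E : Type*} [NormedAddCommGroup E] [NormedSpace ℝ E]
    {F : ℝ → E} {f' : E} {c l : ℝ} (hF : HasDerivAt F f' l) (hF0 : ∀ x ∈ Ioc 0 c, F x = 0)
    (hl : l ∈ Ioo 0 c) : f' = 0 :=
  hF.unique ((hasDerivAt_const l 0).congr_of_eventuallyEq <| Filter.eventually_of_mem
    (Ioo_mem_nhds hl.1 hl.2) fun x hx => hF0 x (Ioo_subset_Ioc_self hx))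

theorem setIntegral_Ioc_zero_eq_of_hasDerivAt {E : Type*} [NormedAddCommGroup E]
    [NormedSpace ℝ E] [CompleteSpace E] {F g : ℝ → E} {b c : ℝ} (hb : 0 < b) (hc : 0 < c)
    (hF0 : ∀ l ∈ Ioc 0 c, F l = 0) (hF : ∀ l ∈ Ioi 0, HasDerivAt F (g l) l)
    (hg : ContinuousOn g (Ioi 0)) :
    ∫ l in Ioc 0 b, g l = F b := by
  obtain ⟨c', hc', hc'b, hc'c⟩ : ∃ c', 0 < c' ∧ c' < b ∧ c' < c :=
    ⟨min b c / 2, by positivity, by linarith [min_le_left b c, lt_min hb hc],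
      by linarith [min_le_right b c, lt_min hb hc]⟩
  have hg0 : ∀ l ∈ Ioc 0 b \ Ioc c' b, g l = 0 := fun l ⟨⟨hl0, hlb⟩, hl⟩ =>
    (hF l hl0).eq_zero_of_eqOn_Ioc hF0 ⟨hl0, (not_lt.1 fun h => hl ⟨h, hlb⟩).trans_lt hc'c⟩
  have hpos : uIcc c' b ⊆ Ioi 0 := fun l hl => hc'.trans_le (uIcc_of_le hc'b.le ▸ hl).1
  rw [setIntegral_eq_of_subset_of_forall_sdiff_eq_zero measurableSet_Ioc
      (Ioc_subset_Ioc_left hc'.le) hg0, ← intervalIntegral.integral_of_le hc'b.le,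
    intervalIntegral.integral_eq_sub_of_hasDerivAt (fun l hl => hF l (hpos hl))
      ((hg.mono hpos).intervalIntegrable), hF0 c' ⟨hc', hc'c.le⟩, sub_zero]

section Dilation

variable {X H : Type*} [NormedAddCommGroup X] [NormedAddCommGroup H] [NormedSpace ℝ H]
  {χ φ ψ : X × H → ℝ}

-- `dilatedMul χ φ (λ⁻¹, ·)` is the test function `χ_{λ⁻¹} φ` of the paper.
def dilatedMul (χ φ : X × H → ℝ) (x : ℝ × (X × H)) : ℝ := χ (x.2.1, x.1 • x.2.2) * φ x.2

theorem dilatedMul_eq_zero_of_notMem {m : ℝ} {p : X × H} (hp : p ∉ tsupport φ) :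
    dilatedMul χ φ (m, p) = 0 := by
  simp [dilatedMul, image_eq_zero_of_notMem_tsupport hp]

theorem dilatedMul_eq_zero {b δ m : ℝ}
    (hχ : ∀ p : X × H, p.1 ∈ Prod.fst '' tsupport φ → b ≤ ‖p.2‖ → χ p = 0)
    (hφ : ∀ p : X × H, ‖p.2‖ ≤ δ → φ p = 0) (hm : 0 ≤ m) (hmb : b ≤ m * δ) (p : X × H) :
    dilatedMul χ φ (m, p) = 0 := by
  by_cases hp : φ p = 0
  · simp [dilatedMul, hp]
  refine mul_eq_zero_of_left (hχ (p.1, m • p.2) ⟨p, subset_tsupport φ hp, rfl⟩ ?_) _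
  rw [norm_smul, Real.norm_of_nonneg hm]
  exact hmb.trans (mul_le_mul_of_nonneg_left (not_le.1 (mt (hφ p) hp)).le hm)

variable [NormedSpace ℝ X]

theorem contDiff_dilatedMul {n : WithTop ℕ∞} (hχ : ContDiff ℝ n χ) (hφ : ContDiff ℝ n φ) :
    ContDiff ℝ n (dilatedMul χ φ) :=
  (hχ.comp (contDiff_snd.fst.prodMk (contDiff_fst.smul contDiff_snd.snd))).mul
    (hφ.comp contDiff_snd)

theorem psi_mul_eq_neg_mul_fderiv_dilatedMul (hχ : ContDiff ℝ 1 χ) (hφ : ContDiff ℝ 1 φ)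
    (hψ : ∀ p, ψ p = -fderiv ℝ χ p (0, p.2)) (m : ℝ) (p : X × H) :
    ψ (p.1, m • p.2) * φ p = -(m * fderiv ℝ (dilatedMul χ φ) (m, p) (1, 0)) := by
  have hray : HasDerivAt (fun σ : ℝ => (p.1, σ • p.2)) (0, p.2) m :=
    (hasDerivAt_const m p.1).prodMk (by simpa using (hasDerivAt_id m).smul_const p.2)
  have hchain : HasDerivAt (fun σ => dilatedMul χ φ (σ, p))
      (fderiv ℝ χ (p.1, m • p.2) (0, p.2) * φ p) m :=
    ((hχ.differentiable one_ne_zero _).hasFDerivAt.comp_hasDerivAt m hray).mul_const (φ p)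
  have hV :=
    ((contDiff_dilatedMul hχ hφ).differentiable one_ne_zero (m, p)).hasDerivAt_comp_prodMk_left
  rw [hV.unique hchain, hψ, show ((0 : X), m • p.2) = m • ((0 : X), p.2) by simp, map_smul,
    smul_eq_mul]
  ring

theorem pairing_psi_dilation_eq (hχ : ContDiff ℝ 1 χ) (hφ : ContDiff ℝ 1 φ)
    (hψ : ∀ p, ψ p = -fderiv ℝ χ p (0, p.2)) (t : (X × H → ℝ) →ₗ[ℝ] ℝ) (m : ℝ) :
    (t fun p => ψ (p.1, m • p.2) * φ p) =
      -(m * t fun p => fderiv ℝ (dilatedMul χ φ) (m, p) (1, 0)) := by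
  simp_rw [psi_mul_eq_neg_mul_fderiv_dilatedMul hχ hφ hψ m]
  exact (map_neg t _).trans (congrArg _ (map_smul t m _))

variable {t : (X × H → ℝ) →ₗ[ℝ] ℝ} {C : ℝ} {k : ℕ}

theorem hasDerivAt_pairing_dilation (hχ : ContDiff ℝ ∞ χ) (hφ : ContDiff ℝ ∞ φ)
    (hφc : HasCompactSupport φ) (hψ : ∀ p, ψ p = -fderiv ℝ χ p (0, p.2))
    (ht : HasOrderBound t (tsupport φ) C k) {l : ℝ} (hl : l ≠ 0) :
    HasDerivAt (fun l => t fun p => χ (p.1, l⁻¹ • p.2) * φ p)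
      ((t fun p => ψ (p.1, l⁻¹ • p.2) * φ p) / l) l := by
  have h := (hasDerivAt_pairing_of_hasOrderBound hφc.isCompact ht (contDiff_dilatedMul hχ hφ)
    (fun _ _ hp => dilatedMul_eq_zero_of_notMem hp) l⁻¹).comp l (hasDerivAt_inv hl)
  rw [pairing_psi_dilation_eq (hχ.of_le (by simp)) (hφ.of_le (by simp)) hψ]
  refine h.congr_deriv ?_
  field_simp

theorem continuousOn_pairing_dilation (hχ : ContDiff ℝ ∞ χ) (hφ : ContDiff ℝ ∞ φ)
    (hφc : HasCompactSupport φ) (hψ : ∀ p, ψ p = -fderiv ℝ χ p (0, p.2))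
    (ht : HasOrderBound t (tsupport φ) C k) :
    ContinuousOn (fun l => (t fun p => ψ (p.1, l⁻¹ • p.2) * φ p) / l) (Ioi 0) := by
  have hD := continuous_pairing_fderiv_of_hasOrderBound hφc.isCompact ht
    (contDiff_dilatedMul hχ hφ) fun _ _ hp => dilatedMul_eq_zero_of_notMem hp
  have hinv : ContinuousOn (fun l : ℝ => l⁻¹) (Ioi 0) :=
    continuousOn_inv₀.mono fun l hl => ne_of_gt hl
  simp_rw [pairing_psi_dilation_eq (hχ.of_le (by simp)) (hφ.of_le (by simp)) hψ]
  exact ((hinv.mul (hD.comp_continuousOn hinv)).neg).div continuousOn_id fun l hl => ne_of_gt hl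

end Dilation

/-- Continuous Littlewood–Paley decomposition: for `ψ = −ρχ` and `φ` vanishing in a
neighborhood of `I = {h = 0}`,
`⟨t,φ⟩ = ∫₀¹ (dλ/λ) ⟨t ψ_{λ^{-1}}, φ⟩ + ⟨t(1−χ), φ⟩`, the integrand vanishing for small `λ`. -/
theorem stmt6 (n d : ℕ)
    (χ : Pt n d → ℝ) (hχsm : ContDiff ℝ (⊤ : ℕ∞) χ)
    (hχ : ∀ K : Set (Fin n → ℝ), IsCompact K → ∃ a b : ℝ, 0 < a ∧ a < b ∧
      (∀ p : Pt n d, p.1 ∈ K → ‖p.2‖ ≤ a → χ p = 1) ∧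
      (∀ p : Pt n d, p.1 ∈ K → b ≤ ‖p.2‖ → χ p = 0))
    (ψ : Pt n d → ℝ)
    (hψ : ∀ p : Pt n d, ψ p = -(∑ j, p.2 j * fderiv ℝ χ p ((0, Pi.single j 1) : Pt n d)))
    (t : (Pt n d → ℝ) →ₗ[ℝ] ℝ) (ht : IsLocDistrib n d (fun φ => t φ))
    (φ : Pt n d → ℝ) (hφsm : ContDiff ℝ (⊤ : ℕ∞) φ) (hφc : HasCompactSupport φ)
    (hφ0 : ∃ δ > (0:ℝ), ∀ p : Pt n d, ‖p.2‖ ≤ δ → φ p = 0) :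
    (∃ δ > (0:ℝ), ∀ l ∈ Set.Ioc (0:ℝ) 1, l ≤ δ →
        t (fun p => ψ (p.1, l⁻¹ • p.2) * φ p) = 0)
    ∧ t φ = (∫ l in Set.Ioc (0:ℝ) 1, t (fun p => ψ (p.1, l⁻¹ • p.2) * φ p) / l)
        + t (fun p => (1 - χ p) * φ p) := by
  obtain ⟨δ, hδ, hφδ⟩ := hφ0
  obtain ⟨a, b, ha, hab, -, hχb⟩ := hχ _ (hφc.isCompact.image continuous_fst)
  have hb : 0 < b := ha.trans hab
  obtain ⟨C, k, htK⟩ := ht _ hφc.isCompact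
  have hψ' : ∀ p : Pt n d, ψ p = -fderiv ℝ χ p (0, p.2) := fun p => by
    rw [hψ, ContinuousLinearMap.sum_mul_apply_zero_single]
  have hF0 : ∀ l ∈ Ioc 0 (δ / b), (t fun p => χ (p.1, l⁻¹ • p.2) * φ p) = 0 := fun l hl => by
    have hlb : b ≤ l⁻¹ * δ := (le_inv_mul_iff₀ hl.1).2 (mul_comm l b ▸ (le_div_iff₀ hb).1 hl.2)
    rw [show (fun p => χ (p.1, l⁻¹ • p.2) * φ p) = 0 from
      funext (dilatedMul_eq_zero hχb hφδ (inv_nonneg.2 hl.1.le) hlb), map_zero]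
  have hF (l : ℝ) (hl : l ∈ Ioi 0) :=
    hasDerivAt_pairing_dilation hχsm hφsm hφc hψ' htK (ne_of_gt hl)
  refine ⟨⟨δ / b / 2, by positivity, fun l hl hlδ => ?_⟩, ?_⟩
  · have hl' : l ∈ Ioo 0 (δ / b) := ⟨hl.1, hlδ.trans_lt (half_lt_self (by positivity))⟩
    exact (div_eq_zero_iff.1 ((hF l hl.1).eq_zero_of_eqOn_Ioc hF0 hl')).resolve_right hl.1.ne'
  · rw [setIntegral_Ioc_zero_eq_of_hasDerivAt one_pos (by positivity) hF0 hF
      (continuousOn_pairing_dilation hχsm hφsm hφc hψ' htK), ← map_add]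
    congr 1
    ext p
    simp only [Pi.add_apply, inv_one, one_smul, Prod.mk.eta]
    ring
end
end

section
/- The soft landing condition is equivalent to the conormal landing of scaled wave front sets: let Γ_M(WF(t)) be the union of all orbits of the lifted scaling flow (x,h;k,ξ) ↦ (x,λh;k,λ^{-1}ξ), λ ∈ (0,T), passing through WF(t), restricted to a ρ-convex set. Then the closure of Γ_M(WF(t)) over I = {h=0} is contained in the conormal C = {(x,0;0,ξ):ξ≠0} if and only if WF(t) satisfies the soft landing condition: there exist ε > 0 and δ > 0 such that WF(t) restricted to {|h|≤ε} is contained in {|k| ≤ δ|h||ξ|}. -/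
/-
The set `{‖k‖ ≤ δ‖h‖‖ξ‖}` is closed and invariant under the flow, so the soft landing condition
confines the closure of the orbits to it, and over `h = 0` it forces `k = 0`. Conversely, if no
limit point over `h = 0` has `ξ = 0` and `k ≠ 0`, compactness of the base and of the unit sphere
in `k` gives `τ > 0` such that every limit point with `‖h‖ = τ` and `‖k‖ = 1` has `‖ξ‖ ≥ τ`.
Normalising `‖k‖ = 1` by conicity and flowing a point of `WF(t)` until `‖h‖ = τ` then turns this
into `τ² ‖k‖ ≤ ‖h‖ ‖ξ‖`.
-/

open Set

noncomputable section

/-- The union of the orbits of the lifted scaling flow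
`(x,h;k,ξ) ↦ (x,λh;k,λ^{-1}ξ)`, `λ ∈ (0,∞)`, through the points of `W` lying in the
`ρ`-convex region `{‖h‖ ≤ ε}`. -/
def flowOrbitsSL (n d : ℕ) (W : Set (Pt n d × Pt n d)) (ε : ℝ) :
    Set (Pt n d × Pt n d) :=
  {v | ∃ w ∈ W, ‖w.1.2‖ ≤ ε ∧ ∃ l : ℝ, 0 < l ∧
        v = ((w.1.1, l • w.1.2), (w.2.1, l⁻¹ • w.2.2))}

def softLandingCone (n d : ℕ) (δ : ℝ) : Set (Pt n d × Pt n d) :=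
  {v | ‖v.2.1‖ ≤ δ * ‖v.1.2‖ * ‖v.2.2‖}

lemma isClosed_softLandingCone (n d : ℕ) (δ : ℝ) : IsClosed (softLandingCone n d δ) :=
  isClosed_le (by fun_prop) (by fun_prop)

lemma flowOrbitsSL_subset_softLandingCone {n d : ℕ} {W : Set (Pt n d × Pt n d)} {ε δ : ℝ}
    (hW : ∀ w ∈ W, ‖w.1.2‖ ≤ ε → ‖w.2.1‖ ≤ δ * ‖w.1.2‖ * ‖w.2.2‖) :
    flowOrbitsSL n d W ε ⊆ softLandingCone n d δ := by
  rintro v ⟨w, hw, hwε, l, hl, rfl⟩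
  calc ‖w.2.1‖ ≤ δ * ‖w.1.2‖ * ‖w.2.2‖ := hW w hw hwε
    _ = δ * ‖l • w.1.2‖ * ‖l⁻¹ • w.2.2‖ := by
      rw [norm_smul, norm_smul, Real.norm_of_nonneg hl.le, Real.norm_of_nonneg (inv_pos.2 hl).le]
      field_simp

lemma mem_flowOrbitsSL_of_mem {n d : ℕ} {W : Set (Pt n d × Pt n d)} {ε : ℝ}
    (hconic : ∀ w ∈ W, ∀ c : ℝ, 0 < c → (w.1, c • w.2) ∈ W) {w : Pt n d × Pt n d}
    (hw : w ∈ W) (hwε : ‖w.1.2‖ ≤ ε) {l c : ℝ} (hl : 0 < l) (hc : 0 < c) :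
    ((w.1.1, l • w.1.2), (c • w.2.1, l⁻¹ • c • w.2.2)) ∈ flowOrbitsSL n d W ε :=
  ⟨(w.1, c • w.2), hconic w hw c hc, hwε, l, hl, rfl⟩

lemma exists_pos_le_norm_add_norm_of_mem_closure {n d : ℕ} {K : Set (Fin n → ℝ)}
    (hK : IsCompact K) {S : Set (Pt n d × Pt n d)}
    (hS : ∀ v ∈ closure S, v.1.2 = 0 → v.2.2 = 0 → v.2.1 = 0) :
    ∃ μ > 0, ∀ v ∈ closure S, v.1.1 ∈ K → ‖v.1.2‖ ≤ 1 → ‖v.2.1‖ = 1 → ‖v.2.2‖ ≤ 1 →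
      μ ≤ ‖v.1.2‖ + ‖v.2.2‖ := by
  set B : Set (Pt n d × Pt n d) :=
    (K ×ˢ Metric.closedBall 0 1) ×ˢ (Metric.sphere 0 1 ×ˢ Metric.closedBall 0 1)
  have hB : IsCompact (closure S ∩ B) :=
    ((hK.prod (isCompact_closedBall _ _)).prod
      ((isCompact_sphere _ _).prod (isCompact_closedBall _ _))).inter_left isClosed_closure
  have hpos : ∀ v ∈ closure S ∩ B, 0 < ‖v.1.2‖ + ‖v.2.2‖ := by
    rintro v ⟨hv, -, hk, -⟩
    replace hk : ‖v.2.1‖ = 1 := mem_sphere_zero_iff_norm.1 hk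
    by_contra! hle
    have hh : v.1.2 = 0 := norm_le_zero_iff.1 (by linarith [norm_nonneg v.2.2])
    have hξ : v.2.2 = 0 := norm_le_zero_iff.1 (by linarith [norm_nonneg v.1.2])
    simp [hS v hv hh hξ] at hk
  obtain ⟨μ, hμ, hμle⟩ := hB.exists_forall_le' (by fun_prop) hpos
  refine ⟨μ, hμ, fun v hv hx hh hk hξ => hμle v ⟨hv, ⟨hx, ?_⟩, ?_, ?_⟩⟩ <;> simpa

lemma exists_pos_le_norm_of_mem_closure {n d : ℕ} {K : Set (Fin n → ℝ)}
    (hK : IsCompact K) {S : Set (Pt n d × Pt n d)}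
    (hS : ∀ v ∈ closure S, v.1.2 = 0 → v.2.2 = 0 → v.2.1 = 0) :
    ∃ τ > 0, ∀ v ∈ closure S, v.1.1 ∈ K → ‖v.1.2‖ = τ → ‖v.2.1‖ = 1 → τ ≤ ‖v.2.2‖ := by
  obtain ⟨μ, hμ, hμle⟩ := exists_pos_le_norm_add_norm_of_mem_closure hK hS
  refine ⟨min (μ / 2) 1, by positivity, fun v hv hx hh hk => ?_⟩
  by_contra! hξ
  have := hμle v hv hx (hh.trans_le (min_le_right _ _)) hk (hξ.le.trans (min_le_right _ _))
  linarith [min_le_left (μ / 2) 1]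

lemma norm_le_of_forall_mem_closure_flowOrbitsSL {n d : ℕ} {W : Set (Pt n d × Pt n d)}
    {K : Set (Fin n → ℝ)} {ε τ : ℝ} (hτ : 0 < τ)
    (hconic : ∀ w ∈ W, ∀ c : ℝ, 0 < c → (w.1, c • w.2) ∈ W)
    (hτle : ∀ v ∈ closure (flowOrbitsSL n d W ε),
      v.1.1 ∈ K → ‖v.1.2‖ = τ → ‖v.2.1‖ = 1 → τ ≤ ‖v.2.2‖)
    {w : Pt n d × Pt n d} (hw : w ∈ W) (hwε : ‖w.1.2‖ ≤ ε) (hx : w.1.1 ∈ K) (hh : w.1.2 ≠ 0) :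
    ‖w.2.1‖ ≤ (τ ^ 2)⁻¹ * ‖w.1.2‖ * ‖w.2.2‖ := by
  rcases eq_or_ne w.2.1 0 with hk | hk
  · rw [hk, norm_zero]; positivity
  have ha := norm_pos_iff.2 hh
  have hb := norm_pos_iff.2 hk
  have hmem := mem_flowOrbitsSL_of_mem hconic hw hwε (div_pos hτ ha) (inv_pos.2 hb)
  have hξ := hτle _ (subset_closure hmem) hx
    (by rw [norm_smul, Real.norm_of_nonneg (div_pos hτ ha).le]; field_simp)
    (by rw [norm_smul, Real.norm_of_nonneg (inv_pos.2 hb).le]; field_simp)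
  rw [norm_smul, norm_smul, Real.norm_of_nonneg (inv_pos.2 (div_pos hτ ha)).le,
    Real.norm_of_nonneg (inv_pos.2 hb).le] at hξ
  have hτ2 : τ ^ 2 * ‖w.2.1‖ ≤ ‖w.1.2‖ * ‖w.2.2‖ := by
    rw [inv_div] at hξ
    field_simp at hξ
    linarith
  rwa [mul_assoc, le_inv_mul_iff₀ (by positivity)]

/-- The closure of `Γ_M(WF(t))` over `I = {h = 0}` is contained in the conormal
`C = {(x,0;0,ξ) : ξ ≠ 0}` iff `WF(t)` satisfies the soft landing condition
`∃ ε, δ > 0 : WF(t)|_{‖h‖ ≤ ε} ⊆ {‖k‖ ≤ δ‖h‖‖ξ‖}`. -/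
theorem stmt12 (n d : ℕ) (K : Set (Fin n → ℝ)) (hK : IsCompact K)
    (W : Set (Pt n d × Pt n d))
    (hbase : ∀ w ∈ W, w.1.1 ∈ K ∧ w.1.2 ≠ 0 ∧ w.2 ≠ 0)
    (hconic : ∀ w ∈ W, ∀ c : ℝ, 0 < c → (w.1, c • w.2) ∈ W) :
    (∃ ε > (0:ℝ),
      closure (flowOrbitsSL n d W ε) ∩ {v : Pt n d × Pt n d | v.1.2 = 0 ∧ v.2 ≠ 0}
        ⊆ {v : Pt n d × Pt n d | v.1.2 = 0 ∧ v.2.1 = 0 ∧ v.2.2 ≠ 0})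
    ↔ (∃ ε > (0:ℝ), ∃ δ > (0:ℝ), ∀ w ∈ W, ‖w.1.2‖ ≤ ε →
        ‖w.2.1‖ ≤ δ * ‖w.1.2‖ * ‖w.2.2‖) := by
  constructor
  · rintro ⟨ε, hε, hsub⟩
    have hS : ∀ v ∈ closure (flowOrbitsSL n d W ε), v.1.2 = 0 → v.2.2 = 0 → v.2.1 = 0 := by
      intro v hv hh hξ
      by_contra hk
      exact hk (hsub ⟨hv, hh, fun h => hk congr($h.1)⟩).2.1
    obtain ⟨τ, hτ, hτle⟩ := exists_pos_le_norm_of_mem_closure hK hS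
    exact ⟨ε, hε, (τ ^ 2)⁻¹, by positivity, fun w hw hwε =>
      norm_le_of_forall_mem_closure_flowOrbitsSL hτ hconic hτle hw hwε (hbase w hw).1
        (hbase w hw).2.1⟩
  · rintro ⟨ε, hε, δ, -, hW⟩
    refine ⟨ε, hε, fun v ⟨hv, hh, hne⟩ => ⟨hh, ?_⟩⟩
    have hk : ‖v.2.1‖ ≤ δ * ‖v.1.2‖ * ‖v.2.2‖ :=
      closure_minimal (flowOrbitsSL_subset_softLandingCone hW) (isClosed_softLandingCone n d δ) hv
    rw [hh, norm_zero, mul_zero, zero_mul, norm_le_zero_iff] at hk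
    exact ⟨hk, fun hξ => hne (Prod.ext hk hξ)⟩
end
end

section
/- Stability of the soft landing condition under sums: let Γ₁, Γ₂ be closed conic subsets of T•ℝ^{n+d}∖0 each satisfying the soft landing condition (∃ε,δ > 0 with Γ_i ∩ {|h|≤ε} ⊂ {|k| ≤ δ|h||ξ|}), and such that Γ₁ ∩ (−Γ₂) = ∅ (uniformly: ∃δ′ > 0 with δ′(|η₁|+|η₂|) ≤ |η₁+η₂| over compacts). Then the fiberwise sum Γ₁ + Γ₂ = {(x,h; η₁+η₂) : (x,h;η_i) ∈ Γ_i} also satisfies the soft landing condition, and hence so does Γ₁ ∪ Γ₂ ∪ (Γ₁+Γ₂). -/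
/-!
Near `h = 0` each summand has `‖kᵢ‖ ≤ δ |h| ‖ηᵢ‖`, so the `k`-part of `η₁ + η₂` is at most
`δ |h| (‖η₁‖ + ‖η₂‖)`. The separation of `Γ₁` from `−Γ₂` bounds `‖η₁‖ + ‖η₂‖` by a multiple of
`‖η₁ + η₂‖ ≤ ‖k‖ + ‖ξ‖`; once `|h|` is small the `k`-term is absorbed, leaving
`‖η₁‖ + ‖η₂‖ ≲ ‖ξ‖`, which is the soft landing bound for the sum.
-/

open Set

noncomputable section

variable {X H K Ξ : Type*} [SeminormedAddCommGroup H] [SeminormedAddCommGroup K]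
  [SeminormedAddCommGroup Ξ]

/-- A point `((x, h), (k, ξ))` stands for the covector `(k, ξ)` at the base point `(x, h)`. -/
def SoftLandingWith (ε δ : ℝ) (Γ : Set ((X × H) × (K × Ξ))) : Prop :=
  ∀ w ∈ Γ, ‖w.1.2‖ ≤ ε → ‖w.2.1‖ ≤ δ * ‖w.1.2‖ * ‖w.2.2‖

def SoftLanding (Γ : Set ((X × H) × (K × Ξ))) : Prop :=
  ∃ ε > (0 : ℝ), ∃ δ > (0 : ℝ), SoftLandingWith ε δ Γ

def fiberwiseSum (Γ₁ Γ₂ : Set ((X × H) × (K × Ξ))) : Set ((X × H) × (K × Ξ)) :=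
  {v | ∃ η₁ η₂ : K × Ξ, (v.1, η₁) ∈ Γ₁ ∧ (v.1, η₂) ∈ Γ₂ ∧ v.2 = η₁ + η₂}

/-- The uniform form of `Γ₁ ∩ (−Γ₂) = ∅`. -/
def SeparatedFromNeg (δ' : ℝ) (Γ₁ Γ₂ : Set ((X × H) × (K × Ξ))) : Prop :=
  ∀ (p : X × H) (η₁ η₂ : K × Ξ), (p, η₁) ∈ Γ₁ → (p, η₂) ∈ Γ₂ → δ' * (‖η₁‖ + ‖η₂‖) ≤ ‖η₁ + η₂‖

namespace SoftLandingWith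

variable {ε ε' δ δ' : ℝ} {Γ Γ₁ Γ₂ : Set ((X × H) × (K × Ξ))}

theorem mono (h : SoftLandingWith ε δ Γ) (hε : ε' ≤ ε) (hδ : δ ≤ δ') :
    SoftLandingWith ε' δ' Γ :=
  fun w hw hh => (h w hw (hh.trans hε)).trans (by gcongr)

theorem union (h₁ : SoftLandingWith ε δ Γ₁) (h₂ : SoftLandingWith ε δ Γ₂) :
    SoftLandingWith ε δ (Γ₁ ∪ Γ₂) := by
  rintro w (hw | hw)
  exacts [h₁ w hw, h₂ w hw]

theorem fiberwiseSum (h₁ : SoftLandingWith ε δ Γ₁) (h₂ : SoftLandingWith ε δ Γ₂)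
    (hδ : 0 ≤ δ) (hδ' : 0 < δ') (hsep : SeparatedFromNeg δ' Γ₁ Γ₂) (hε : 2 * δ * ε ≤ δ') :
    SoftLandingWith ε (2 * δ / δ') (fiberwiseSum Γ₁ Γ₂) := by
  rintro ⟨p, _⟩ ⟨η₁, η₂, hη₁, hη₂, rfl⟩ hp
  set T := ‖η₁‖ + ‖η₂‖
  have hk : ‖η₁.1 + η₂.1‖ ≤ δ * ‖p.2‖ * T :=
    calc ‖η₁.1 + η₂.1‖ ≤ ‖η₁.1‖ + ‖η₂.1‖ := norm_add_le _ _
      _ ≤ δ * ‖p.2‖ * ‖η₁.2‖ + δ * ‖p.2‖ * ‖η₂.2‖ := add_le_add (h₁ _ hη₁ hp) (h₂ _ hη₂ hp)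
      _ ≤ δ * ‖p.2‖ * T := by rw [← mul_add]; gcongr; exact add_le_add (norm_snd_le η₁) (norm_snd_le η₂)
  have hk_small : δ * ‖p.2‖ * T ≤ δ' / 2 * T := by
    gcongr
    linarith [mul_le_mul_of_nonneg_left hp hδ]
  have hT : δ' / 2 * T ≤ ‖η₁.2 + η₂.2‖ := by
    have hsum : ‖η₁ + η₂‖ ≤ ‖η₁.1 + η₂.1‖ + ‖η₁.2 + η₂.2‖ :=
      max_le_add_of_nonneg (norm_nonneg _) (norm_nonneg _)
    linarith [hsep p η₁ η₂ hη₁ hη₂]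
  calc ‖η₁.1 + η₂.1‖ ≤ δ * ‖p.2‖ * T := hk
    _ = 2 * δ / δ' * ‖p.2‖ * (δ' / 2 * T) := by field_simp
    _ ≤ 2 * δ / δ' * ‖p.2‖ * ‖η₁.2 + η₂.2‖ := by gcongr

end SoftLandingWith

namespace SoftLanding

variable {Γ₁ Γ₂ : Set ((X × H) × (K × Ξ))}

theorem exists_common (h₁ : SoftLanding Γ₁) (h₂ : SoftLanding Γ₂) :
    ∃ ε > (0 : ℝ), ∃ δ > (0 : ℝ), SoftLandingWith ε δ Γ₁ ∧ SoftLandingWith ε δ Γ₂ := by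
  obtain ⟨ε₁, hε₁, δ₁, hδ₁, h₁⟩ := h₁
  obtain ⟨ε₂, hε₂, δ₂, hδ₂, h₂⟩ := h₂
  exact ⟨min ε₁ ε₂, lt_min hε₁ hε₂, max δ₁ δ₂, lt_max_of_lt_left hδ₁,
    h₁.mono (min_le_left _ _) (le_max_left _ _), h₂.mono (min_le_right _ _) (le_max_right _ _)⟩

theorem union (h₁ : SoftLanding Γ₁) (h₂ : SoftLanding Γ₂) : SoftLanding (Γ₁ ∪ Γ₂) := by
  obtain ⟨ε, hε, δ, hδ, h₁, h₂⟩ := h₁.exists_common h₂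
  exact ⟨ε, hε, δ, hδ, h₁.union h₂⟩

theorem fiberwiseSum (h₁ : SoftLanding Γ₁) (h₂ : SoftLanding Γ₂)
    (hsep : ∃ δ' > (0 : ℝ), SeparatedFromNeg δ' Γ₁ Γ₂) :
    SoftLanding (fiberwiseSum Γ₁ Γ₂) := by
  obtain ⟨ε, hε, δ, hδ, h₁, h₂⟩ := h₁.exists_common h₂
  obtain ⟨δ', hδ', hsep⟩ := hsep
  have hε' : 2 * δ * min ε (δ' / (2 * δ)) ≤ δ' :=
    calc 2 * δ * min ε (δ' / (2 * δ)) ≤ 2 * δ * (δ' / (2 * δ)) := by gcongr; exact min_le_right _ _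
      _ = δ' := by field_simp
  exact ⟨min ε (δ' / (2 * δ)), by positivity, 2 * δ / δ', by positivity,
    (h₁.mono (min_le_left _ _) le_rfl).fiberwiseSum (h₂.mono (min_le_left _ _) le_rfl)
      hδ.le hδ' hsep hε'⟩

end SoftLanding

/-- Stability of the soft landing condition under fiberwise sums: if `Γ₁`, `Γ₂` satisfy the
soft landing condition and `Γ₁ ∩ (−Γ₂) = ∅` uniformly, then
`Γ₁ ∪ Γ₂ ∪ (Γ₁ + Γ₂)` satisfies the soft landing condition. -/
theorem stmt13 (n d : ℕ) (Γ₁ Γ₂ : Set (Pt n d × Pt n d))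
    (hsl₁ : ∃ ε > (0:ℝ), ∃ δ > (0:ℝ), ∀ w ∈ Γ₁, ‖w.1.2‖ ≤ ε →
      ‖w.2.1‖ ≤ δ * ‖w.1.2‖ * ‖w.2.2‖)
    (hsl₂ : ∃ ε > (0:ℝ), ∃ δ > (0:ℝ), ∀ w ∈ Γ₂, ‖w.1.2‖ ≤ ε →
      ‖w.2.1‖ ≤ δ * ‖w.1.2‖ * ‖w.2.2‖)
    (hdisj : ∃ δ' > (0:ℝ), ∀ p η₁ η₂ : Pt n d,
      (p, η₁) ∈ Γ₁ → (p, η₂) ∈ Γ₂ → δ' * (‖η₁‖ + ‖η₂‖) ≤ ‖η₁ + η₂‖) :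
    ∃ ε > (0:ℝ), ∃ δ > (0:ℝ),
      ∀ w ∈ Γ₁ ∪ Γ₂ ∪
          {v : Pt n d × Pt n d | ∃ η₁ η₂ : Pt n d,
            (v.1, η₁) ∈ Γ₁ ∧ (v.1, η₂) ∈ Γ₂ ∧ v.2 = η₁ + η₂},
        ‖w.1.2‖ ≤ ε → ‖w.2.1‖ ≤ δ * ‖w.1.2‖ * ‖w.2.2‖ :=
  SoftLanding.union (SoftLanding.union hsl₁ hsl₂) (SoftLanding.fiberwiseSum hsl₁ hsl₂ hdisj)
end
end

section
/- Locality of poles of the meromorphic regularization: let t ∈ E_s(U∖I) and define for Re(μ) large the holomorphic family ⟨t^μ, ω⟩ = ∫₀¹ (dλ/λ) λ^μ ⟨t ψ_{λ^{-1}}, ω⟩ (with ψ = −ρχ supported in an annulus around I). If μ ↦ t^μ extends meromorphically to ℂ with values in 𝒟′(U), then all the Laurent coefficients of negative index at any pole μ₀ are distributions supported on U ∩ I. -/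
/-!
Paired with a test function `ω` supported away from `I = {h = 0}`, the scaled cutoff
`ψ(·, λ⁻¹ ·)` misses the support of `ω` for small `λ`, because `ψ` lives in an annulus
around `I`; and `λ ↦ ⟨t ψ_{λ⁻¹}, ω⟩` is continuous because `t` has finite order on compacts.
So for `Re μ` large, `⟨t^μ, ω⟩` is the Mellin transform of a function with compact support in
`(0, ∞)`, which is entire. By the identity theorem for meromorphic functions the meromorphic
extension coincides with this entire function off its poles, so every contour integral
computing a Laurent coefficient of negative index vanishes.
-/

open Set MeasureTheory

noncomputable section

/-- Test functions on `U`. -/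
def IsTestOn (n d : ℕ) (U : Set (Pt n d)) (φ : Pt n d → ℝ) : Prop :=
  ContDiff ℝ (⊤ : ℕ∞) φ ∧ HasCompactSupport φ ∧ tsupport φ ⊆ U

/-- The pairing `⟨t_λ, φ⟩ = λ^{-d} ⟨t, φ(·, λ^{-1}·)⟩`. -/
def pairScaleD (n d : ℕ) (t : (Pt n d → ℝ) → ℝ) (l : ℝ) (φ : Pt n d → ℝ) : ℝ :=
  t (fun p => φ (p.1, l⁻¹ • p.2)) / l ^ d

/-- `t ∈ E_s(U)`: weak homogeneity of degree `s`. -/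
def WeaklyHomogOn (n d : ℕ) (U : Set (Pt n d)) (s : ℝ) (t : (Pt n d → ℝ) → ℝ) : Prop :=
  ∀ φ : Pt n d → ℝ, IsTestOn n d U φ →
    ∃ C : ℝ, ∀ l ∈ Set.Ioc (0:ℝ) 1, |l ^ (-s) * pairScaleD n d t l φ| ≤ C

open Filter Topology Metric

section ParametricDerivatives

variable {E F : Type*} [NormedAddCommGroup E] [NormedSpace ℝ E]
  [NormedAddCommGroup F] [NormedSpace ℝ F]

theorem contDiff_iteratedFDeriv_param {Φ : ℝ × E → F} (hΦ : ContDiff ℝ (⊤ : ℕ∞) Φ) (i : ℕ) :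
    ContDiff ℝ (⊤ : ℕ∞) fun q : ℝ × E => iteratedFDeriv ℝ i (fun y => Φ (q.1, y)) q.2 := by
  induction i with
  | zero => exact (continuousMultilinearCurryFin0 ℝ E F).symm.contDiff.comp hΦ
  | succ i ih =>
    have hfderiv : ContDiff ℝ (⊤ : ℕ∞) fun q : ℝ × E =>
        fderiv ℝ (fun y => iteratedFDeriv ℝ i (fun y' => Φ (q.1, y')) y) q.2 :=
      (ih.comp (contDiff_fst.fst.prodMk contDiff_snd)).fderiv contDiff_snd
        (by exact_mod_cast le_top)
    simp_rw [iteratedFDeriv_succ_eq_comp_left]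
    exact (continuousMultilinearCurryLeftEquiv ℝ (fun _ : Fin (i + 1) => E) F).symm.contDiff.comp
      hfderiv

theorem eventually_norm_iteratedFDeriv_sub_le {Φ : ℝ × E → F} (hΦ : ContDiff ℝ (⊤ : ℕ∞) Φ)
    {K : Set E} (hK : IsCompact K) (hΦK : ∀ u, tsupport (fun x => Φ (u, x)) ⊆ K) (i : ℕ)
    (u₀ : ℝ) {δ : ℝ} (hδ : 0 < δ) :
    ∀ᶠ u in 𝓝 u₀, ∀ x, ‖iteratedFDeriv ℝ i (fun y => Φ (u, y)) x -
      iteratedFDeriv ℝ i (fun y => Φ (u₀, y)) x‖ ≤ δ := by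
  set G : ℝ → E → E [×i]→L[ℝ] F := fun u x => iteratedFDeriv ℝ i (fun y => Φ (u, y)) x
  have hG : Continuous ↿G := (contDiff_iteratedFDeriv_param hΦ i).continuous
  have hunif : TendstoUniformlyOn G (G u₀) (𝓝 u₀) K := by
    have := ((isCompact_Icc.prod hK).uniformContinuousOn_of_continuous hG.continuousOn
      ).tendstoUniformlyOn (x := u₀) (by simp : u₀ ∈ Icc (u₀ - 1) (u₀ + 1))
    rwa [nhdsWithin_eq_nhds.2 (Icc_mem_nhds (by linarith) (by linarith))] at this
  have hG0 : ∀ u, ∀ x ∉ K, iteratedFDeriv ℝ i (fun y => Φ (u, y)) x = 0 := fun u x hx =>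
    image_eq_zero_of_notMem_tsupport fun h => hx (hΦK u (tsupport_iteratedFDeriv_subset i h))
  filter_upwards [Metric.tendstoUniformlyOn_iff.1 hunif δ hδ] with u hu x
  by_cases hx : x ∈ K
  · rw [← dist_eq_norm, dist_comm]
    exact (hu x hx).le
  · rw [hG0 u x hx, hG0 u₀ x hx, sub_zero, norm_zero]
    exact hδ.le

end ParametricDerivatives

theorem mellin_indicator_Ioc {E : Type*} [NormedAddCommGroup E] [NormedSpace ℂ E]
    (f : ℝ → E) (μ : ℂ) :
    mellin ((Ioc 0 1).indicator f) μ = ∫ l in Ioc (0 : ℝ) 1, ((l : ℂ) ^ μ / l) • f l := by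
  have hcpow : ∀ l ∈ Ioc (0 : ℝ) 1, (l : ℂ) ^ (μ - 1) = (l : ℂ) ^ μ / l := fun l hl => by
    rw [Complex.cpow_sub _ _ (Complex.ofReal_ne_zero.2 hl.1.ne'), Complex.cpow_one]
  simp_rw [mellin, ← indicator_smul]
  rw [setIntegral_indicator measurableSet_Ioc, inter_eq_right.2 Ioc_subset_Ioi_self]
  exact setIntegral_congr_fun measurableSet_Ioc fun l hl => by simp only [hcpow l hl]

theorem differentiable_mellin_of_eventuallyEq_zero {E : Type*} [NormedAddCommGroup E]
    [NormedSpace ℂ E] {f : ℝ → E} (hf : LocallyIntegrableOn f (Ioi 0))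
    (hbot : f =ᶠ[𝓝[>] 0] 0) (htop : f =ᶠ[atTop] 0) : Differentiable ℂ (mellin f) := fun s =>
  mellin_differentiableAt_of_isBigO_rpow hf (htop.trans_isBigO (Asymptotics.isBigO_zero _ _))
    (lt_add_one s.re) (hbot.trans_isBigO (Asymptotics.isBigO_zero _ _)) (sub_one_lt s.re)

theorem differentiable_mellin_indicator_Ioc {E : Type*} [NormedAddCommGroup E]
    [NormedSpace ℂ E] {f : ℝ → E} (hf : ContinuousOn f (Ioi 0)) {l₀ : ℝ} (hl₀ : 0 < l₀)
    (hf0 : EqOn f 0 (Ioo 0 l₀)) : Differentiable ℂ (mellin ((Ioc 0 1).indicator f)) := by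
  have hint : IntegrableOn f (Ioc 0 1) := by
    have hIcc : IntegrableOn f (Icc l₀ 1) :=
      (hf.mono fun l (hl : l ∈ Icc l₀ 1) => hl₀.trans_le hl.1).integrableOn_Icc
    refine (((integrableOn_congr_fun hf0 measurableSet_Ioo).2 integrableOn_zero).union
      hIcc).mono_set fun l hl => ?_
    rcases lt_or_ge l l₀ with h | h
    exacts [Or.inl ⟨hl.1, h⟩, Or.inr ⟨h, hl.2⟩]
  refine differentiable_mellin_of_eventuallyEq_zero
    ((hint.integrable_indicator measurableSet_Ioc).locallyIntegrable.locallyIntegrableOn _)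
    ?_ ?_
  · filter_upwards [Ioo_mem_nhdsGT hl₀] with l hl
    exact indicator_apply_eq_zero.2 fun _ => hf0 hl
  · filter_upwards [eventually_gt_atTop 1] with l hl
    exact indicator_of_notMem (fun h => hl.not_ge h.2) _

theorem Meromorphic.eventuallyEq_nhdsNE_of_eqOn {𝕜 E : Type*} [RCLike 𝕜] [NormedAddCommGroup E]
    [NormedSpace 𝕜 E] {f g : 𝕜 → E} (hf : Meromorphic f) (hg : Meromorphic g) {V : Set 𝕜}
    (hV : IsOpen V) (hVne : V.Nonempty) (hfg : EqOn f g V) (z : 𝕜) : f =ᶠ[𝓝[≠] z] g := by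
  obtain ⟨v, hv⟩ := hVne
  have hv_top : meromorphicOrderAt (f - g) v = ⊤ :=
    meromorphicOrderAt_eq_top_iff.2 <| eventually_nhdsWithin_of_eventually_nhds <|
      Filter.mem_of_superset (hV.mem_nhds hv) fun w hw => sub_eq_zero.2 (hfg hw)
  have hz_top : meromorphicOrderAt (f - g) z = ⊤ := by
    by_contra hz
    exact (hf.sub hg).exists_meromorphicOrderAt_ne_top_iff_forall.1 ⟨z, hz⟩ v hv_top
  exact (meromorphicOrderAt_eq_top_iff.1 hz_top).mono fun w hw => sub_eq_zero.1 hw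

theorem Filter.EventuallyEq.exists_circleIntegral_sub_zpow_mul_eq_zero {f g : ℂ → ℂ} {z₀ : ℂ}
    (hfg : f =ᶠ[𝓝[≠] z₀] g) (hg : Differentiable ℂ g) :
    ∃ r > (0 : ℝ), ∀ k : ℤ, k < 0 → (∮ z in C(z₀, r), (z - z₀) ^ (-k - 1) * f z) = 0 := by
  obtain ⟨r, hr, hball⟩ := Metric.eventually_nhds_iff_ball.1 (eventually_nhdsWithin_iff.1 hfg)
  refine ⟨r / 2, half_pos hr, fun k hk => ?_⟩
  have hsphere : EqOn (fun z => (z - z₀) ^ (-k - 1) * f z) (fun z => (z - z₀) ^ (-k - 1) * g z)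
      (sphere z₀ (r / 2)) := fun z hz => by
    have hz' : dist z z₀ = r / 2 := hz
    dsimp only
    rw [hball z (by rw [mem_ball]; linarith) fun h => by
      rw [mem_singleton_iff.1 h, dist_self] at hz'; linarith]
  rw [circleIntegral.integral_congr (half_pos hr).le hsphere]
  exact (((differentiable_id.sub_const z₀).zpow (Or.inr (by omega))).mul hg
    ).diffContOnCl.circleIntegral_eq_zero (half_pos hr).le

theorem IsLocDistrib.continuous_apply_param {n d : ℕ} {t : (Pt n d → ℝ) →ₗ[ℝ] ℝ}
    (ht : IsLocDistrib n d t) {Φ : ℝ × Pt n d → ℝ} (hΦ : ContDiff ℝ (⊤ : ℕ∞) Φ) {K : Set (Pt n d)}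
    (hK : IsCompact K) (hΦK : ∀ u, tsupport (fun x => Φ (u, x)) ⊆ K) :
    Continuous fun u => t (fun x => Φ (u, x)) := by
  have hΦu : ∀ u, ContDiff ℝ (⊤ : ℕ∞) fun x => Φ (u, x) := fun u =>
    hΦ.comp (contDiff_const.prodMk contDiff_id)
  obtain ⟨C, k, hC⟩ := ht K hK
  refine continuous_iff_continuousAt.2 fun u₀ => Metric.tendsto_nhds.2 fun ε hε => ?_
  set δ := ε / (|C| + 1)
  have hδ : 0 < δ := by positivity
  have hsmall : ∀ᶠ u in 𝓝 u₀, ∀ i ∈ Iic k, ∀ x, ‖iteratedFDeriv ℝ i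
      ((fun x => Φ (u, x)) - fun x => Φ (u₀, x)) x‖ ≤ δ := by
    refine (finite_Iic k).eventually_all.2 fun i _ => ?_
    filter_upwards [eventually_norm_iteratedFDeriv_sub_le hΦ hK hΦK i u₀ hδ] with u hu x
    rw [iteratedFDeriv_sub_apply ((hΦu u).contDiffAt.of_le (by exact_mod_cast le_top))
      ((hΦu u₀).contDiffAt.of_le (by exact_mod_cast le_top))]
    exact hu x
  filter_upwards [hsmall] with u hu
  have hsupp : tsupport ((fun x => Φ (u, x)) - fun x => Φ (u₀, x)) ⊆ K :=
    closure_minimal ((Function.support_sub _ _).trans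
      (union_subset ((subset_tsupport _).trans (hΦK u)) ((subset_tsupport _).trans (hΦK u₀))))
      hK.isClosed
  rw [Real.dist_eq, ← map_sub]
  calc |t ((fun x => Φ (u, x)) - fun x => Φ (u₀, x))| ≤ C * δ :=
        hC _ ((hΦu u).sub (hΦu u₀)) hsupp δ hu
    _ ≤ |C| * δ := by gcongr; exact le_abs_self C
    _ < (|C| + 1) * δ := by gcongr; linarith
    _ = ε := by simp only [δ]; field_simp

theorem IsLocDistrib.continuousOn_apply_scaled {n d : ℕ} {t : (Pt n d → ℝ) →ₗ[ℝ] ℝ}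
    (ht : IsLocDistrib n d t) {ψ ω : Pt n d → ℝ} (hψ : ContDiff ℝ (⊤ : ℕ∞) ψ)
    (hω : ContDiff ℝ (⊤ : ℕ∞) ω) (hωc : HasCompactSupport ω) :
    ContinuousOn (fun l : ℝ => t (fun p => ψ (p.1, l⁻¹ • p.2) * ω p)) (Ioi 0) := by
  -- in the logarithmic scale `l = exp v` the family is smooth in `v ∈ ℝ`
  have hexp : Continuous fun v : ℝ => t (fun p => ψ (p.1, Real.exp (-v) • p.2) * ω p) :=
    ht.continuous_apply_param
      ((hψ.comp (contDiff_snd.fst.prodMk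
        ((Real.contDiff_exp.comp contDiff_fst.neg).smul contDiff_snd.snd))).mul
        (hω.comp contDiff_snd))
      hωc fun _ => tsupport_mul_subset_right
  refine (hexp.comp_continuousOn (Real.continuousOn_log.mono fun l hl => ne_of_gt hl)).congr
    fun l hl => ?_
  simp [Real.exp_neg, Real.exp_log (mem_Ioi.1 hl)]

/-- `ρχ`, for the Euler vector field `ρ = hʲ ∂_{hʲ}` in the transverse variables. -/
def eulerDeriv {n d : ℕ} (χ : Pt n d → ℝ) (p : Pt n d) : ℝ :=
  ∑ j, p.2 j * fderiv ℝ χ p ((0, Pi.single j 1) : Pt n d)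

theorem contDiff_eulerDeriv {n d : ℕ} {χ : Pt n d → ℝ} (hχ : ContDiff ℝ (⊤ : ℕ∞) χ) :
    ContDiff ℝ (⊤ : ℕ∞) (eulerDeriv χ) :=
  ContDiff.sum fun j _ => ((contDiff_pi.1 contDiff_snd) j).mul
    ((hχ.fderiv_right (by exact_mod_cast le_top)).clm_apply contDiff_const)

theorem eulerDeriv_eq_zero_of_eventuallyEq_const {n d : ℕ} {χ : Pt n d → ℝ} {p : Pt n d}
    {c : ℝ} (h : χ =ᶠ[𝓝 p] fun _ => c) : eulerDeriv χ p = 0 := by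
  simp [eulerDeriv, h.fderiv_eq]

theorem exists_pos_forall_eulerDeriv_scaled_mul_eq_zero {n d : ℕ} {χ : Pt n d → ℝ}
    (hχ : ∀ K : Set (Fin n → ℝ), IsCompact K →
      ∃ b > 0, ∀ p : Pt n d, p.1 ∈ K → b ≤ ‖p.2‖ → χ p = 0)
    {ω : Pt n d → ℝ} (hω : HasCompactSupport ω) (hωI : ∀ p ∈ tsupport ω, p.2 ≠ 0) :
    ∃ l₀ > (0 : ℝ), ∀ l ∈ Ioo 0 l₀, ∀ p, eulerDeriv χ (p.1, l⁻¹ • p.2) * ω p = 0 := by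
  set K₁ := Prod.fst '' tsupport ω
  obtain ⟨b, hb, hχ0⟩ := hχ (cthickening 1 K₁) (hω.image continuous_fst).cthickening
  obtain ⟨ε, hε, hεω⟩ := hω.isCompact.exists_forall_le' continuous_snd.norm.continuousOn
    fun p hp => norm_pos_iff.2 (hωI p hp)
  refine ⟨ε / b, by positivity, fun l hl p => ?_⟩
  by_cases hp : p ∈ tsupport ω
  · refine mul_eq_zero_of_left (eulerDeriv_eq_zero_of_eventuallyEq_const (c := 0) ?_) _
    have hfar : b < ‖l⁻¹ • p.2‖ := by
      rw [norm_smul, norm_inv, Real.norm_of_nonneg hl.1.le, inv_mul_eq_div, lt_div_iff₀ hl.1]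
      calc b * l < ε := by have := hl.2; rw [lt_div_iff₀ hb] at this; linarith
        _ ≤ ‖p.2‖ := hεω p hp
    have hW : IsOpen {q : Pt n d | q.1 ∈ thickening 1 K₁ ∧ b < ‖q.2‖} :=
      (isOpen_thickening.preimage continuous_fst).inter
        (isOpen_lt continuous_const continuous_snd.norm)
    filter_upwards [hW.mem_nhds ⟨self_subset_thickening one_pos _ ⟨p, hp, rfl⟩, hfar⟩]
      with q hq
    exact hχ0 q (thickening_subset_cthickening _ _ hq.1) hq.2.le
  · rw [image_eq_zero_of_notMem_tsupport hp, mul_zero]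

theorem stmt18_general (n d : ℕ) (σ : ℝ) (U : Set (Pt n d))
    (t : (Pt n d → ℝ) →ₗ[ℝ] ℝ) (ht : IsLocDistrib n d (fun φ => t φ))
    (χ : Pt n d → ℝ) (hχsm : ContDiff ℝ (⊤ : ℕ∞) χ)
    (hχ : ∀ K : Set (Fin n → ℝ), IsCompact K → ∃ a b : ℝ, 0 < a ∧ a < b ∧
      (∀ p : Pt n d, p.1 ∈ K → ‖p.2‖ ≤ a → χ p = 1) ∧
      (∀ p : Pt n d, p.1 ∈ K → b ≤ ‖p.2‖ → χ p = 0))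
    (ψ : Pt n d → ℝ)
    (hψ : ∀ p : Pt n d, ψ p = -(∑ j, p.2 j * fderiv ℝ χ p ((0, Pi.single j 1) : Pt n d)))
    (S : ℂ → (Pt n d → ℝ) → ℂ)
    (hagree : ∀ ω, IsTestOn n d U ω → ∀ μ : ℂ, σ < μ.re →
      S μ ω = ∫ l in Set.Ioc (0:ℝ) 1,
        ((l : ℂ) ^ μ * ((t (fun p => ψ (p.1, l⁻¹ • p.2) * ω p) : ℝ) : ℂ)) / (l : ℂ))
    (hmero : ∀ ω, IsTestOn n d U ω → ∀ μ₀ : ℂ, ∃ r > (0:ℝ), ∃ Np : ℕ,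
      DifferentiableOn ℂ (fun μ => (μ - μ₀) ^ Np * S μ ω) (Metric.ball μ₀ r)) :
    ∀ ω, IsTestOn n d U ω → tsupport ω ⊆ U \ {p : Pt n d | p.2 = 0} →
      ∀ μ₀ : ℂ, ∃ r > (0:ℝ), ∀ k : ℤ, k < 0 →
        (∮ μ in C(μ₀, r), (μ - μ₀) ^ (-k - 1) * S μ ω) = 0 := by
  intro ω hω hωI μ₀
  obtain rfl : ψ = fun p => -eulerDeriv χ p := funext hψ
  set g : ℝ → ℝ := fun l => t (fun p => -eulerDeriv χ (p.1, l⁻¹ • p.2) * ω p)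
  have hg : ContinuousOn g (Ioi 0) :=
    ht.continuousOn_apply_scaled (contDiff_eulerDeriv hχsm).neg hω.1 hω.2.1
  have hχ0 : ∀ K : Set (Fin n → ℝ), IsCompact K →
      ∃ b > 0, ∀ p : Pt n d, p.1 ∈ K → b ≤ ‖p.2‖ → χ p = 0 := fun K hK => by
    obtain ⟨a, b, ha, hab, -, hb⟩ := hχ K hK
    exact ⟨b, ha.trans hab, hb⟩
  obtain ⟨l₀, hl₀, hψω⟩ :=
    exists_pos_forall_eulerDeriv_scaled_mul_eq_zero hχ0 hω.2.1 fun p hp => (hωI hp).2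
  have hg0 : EqOn g 0 (Ioo 0 l₀) := fun l hl => by
    simp only [g, neg_mul, hψω l hl, neg_zero]
    exact map_zero t
  have hF : Differentiable ℂ (mellin ((Ioc 0 1).indicator fun l => (g l : ℂ))) :=
    differentiable_mellin_indicator_Ioc (Complex.continuous_ofReal.comp_continuousOn hg) hl₀
      fun l hl => by simp [hg0 hl]
  have hSF : EqOn (S · ω) (mellin ((Ioc 0 1).indicator fun l => (g l : ℂ))) {μ | σ < μ.re} :=
    fun μ hμ => by
      simp_rw [hagree ω hω μ hμ, mellin_indicator_Ioc, smul_eq_mul, div_mul_eq_mul_div]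
      rfl
  have hS : Meromorphic (S · ω) := fun μ => by
    obtain ⟨r, hr, Np, hNp⟩ := hmero ω hω μ
    exact ⟨Np, by simpa only [smul_eq_mul] using hNp.analyticAt (ball_mem_nhds μ hr)⟩
  exact (hS.eventuallyEq_nhdsNE_of_eqOn (fun μ => (hF.analyticAt μ).meromorphicAt)
    (isOpen_lt continuous_const Complex.continuous_re) ⟨σ + 1, by simp⟩ hSF μ₀
    ).exists_circleIntegral_sub_zpow_mul_eq_zero hF

/-- Locality of the poles of the meromorphic regularization
`⟨t^μ, ω⟩ = ∫₀¹ (dλ/λ) λ^μ ⟨t ψ_{λ^{-1}}, ω⟩`: all negative-index Laurent coefficients of a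
meromorphic extension are supported on `U ∩ I`; i.e., paired against any test form
supported in `U ∖ I` they vanish. -/
theorem stmt18 (n d : ℕ) (s σ : ℝ) (U : Set (Pt n d)) (hU : IsOpen U)
    (t : (Pt n d → ℝ) →ₗ[ℝ] ℝ) (ht : IsLocDistrib n d (fun φ => t φ))
    (χ : Pt n d → ℝ) (hχsm : ContDiff ℝ (⊤ : ℕ∞) χ)
    (hχ : ∀ K : Set (Fin n → ℝ), IsCompact K → ∃ a b : ℝ, 0 < a ∧ a < b ∧
      (∀ p : Pt n d, p.1 ∈ K → ‖p.2‖ ≤ a → χ p = 1) ∧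
      (∀ p : Pt n d, p.1 ∈ K → b ≤ ‖p.2‖ → χ p = 0))
    (ψ : Pt n d → ℝ)
    (hψ : ∀ p : Pt n d, ψ p = -(∑ j, p.2 j * fderiv ℝ χ p ((0, Pi.single j 1) : Pt n d)))
    (hhom : WeaklyHomogOn n d (U \ {p : Pt n d | p.2 = 0}) s (fun φ => t φ))
    (S : ℂ → (Pt n d → ℝ) → ℂ)
    (hagree : ∀ ω, IsTestOn n d U ω → ∀ μ : ℂ, σ < μ.re →
      S μ ω = ∫ l in Set.Ioc (0:ℝ) 1,
        ((l : ℂ) ^ μ * ((t (fun p => ψ (p.1, l⁻¹ • p.2) * ω p) : ℝ) : ℂ)) / (l : ℂ))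
    (hmero : ∀ ω, IsTestOn n d U ω → ∀ μ₀ : ℂ, ∃ r > (0:ℝ), ∃ Np : ℕ,
      DifferentiableOn ℂ (fun μ => (μ - μ₀) ^ Np * S μ ω) (Metric.ball μ₀ r)) :
    ∀ ω, IsTestOn n d U ω → tsupport ω ⊆ U \ {p : Pt n d | p.2 = 0} →
      ∀ μ₀ : ℂ, ∃ r > (0:ℝ), ∀ k : ℤ, k < 0 →
        (∮ μ in C(μ₀, r), (μ - μ₀) ^ (-k - 1) * S μ ω) = 0 :=
  stmt18_general n d σ U t ht χ hχsm hχ ψ hψ S hagree hmero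
end
end

section
/- Gronwall bound for the conjugating flow between Euler vector fields: let Φ(λ) solve the non-autonomous ODE dΦ/dλ = X(λ, Φ(λ)) with Φ(1) = Id, where X(λ,x,h) = −(h^i A_i^j(x,λh) ∂_{x^j} + h^i h^j B_{ij}^k(x,λh) ∂_{h^k}) with A,B smooth. Then on a sufficiently small neighborhood {|h| ≤ ε₂} of a point of I, the h-component of the flow satisfies |h(λ)| ≤ e^{(1−λ)ε₁ b}|h(1)| for all λ ∈ [0,1] (with b a bound on |B| over the region), so the flow Φ(λ) exists on the whole closed interval [0,1] including λ = 0, with no blow-up. -/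
/-! Multiplying the field by a bump function that equals `1` near `[0,1] × {|x - x₀| ≤ 1, |h| ≤ 1}`
gives a compactly supported smooth field, whose flow exists on every bounded time interval by
Picard–Lindelöf. On the support `|h| < ε₁`, so the quadratic bound `b |h|²` on the `h`-component
becomes the linear bound `ε₁ b |h|`; Grönwall, run backwards from `λ = 1`, then gives
`|h(λ)| ≤ e^{(1-λ) ε₁ b} |h(1)|`, and the `x`-component, whose speed is `O(|h|)`, drifts by
`O(|h(1)|)`. Starting in the `ε₂`-box the solution therefore never leaves the region where the
bump is `1`, so it solves the original equation on `[0,1]`. -/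

open Set

noncomputable section

/-- The nonautonomous vector field
`X(λ,x,h) = −(h^i A_i^j(x,λh) ∂_{x^j} + h^i h^j B_{ij}^k(x,λh) ∂_{h^k})`. -/
def XfieldAB (n d : ℕ) (A : Fin d → Fin n → Pt n d → ℝ)
    (B : Fin d → Fin d → Fin d → Pt n d → ℝ) (l : ℝ) (p : Pt n d) : Pt n d :=
  ((fun j' => -(∑ i, p.2 i * A i j' (p.1, l • p.2))),
   (fun k => -(∑ i, ∑ j, p.2 i * p.2 j * B i j k (p.1, l • p.2))))

open Metric

theorem IsCompact.exists_forall_abs_le {X ι : Type*} [TopologicalSpace X] [Fintype ι]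
    {K : Set X} (hK : IsCompact K) {F : ι → X → ℝ} (hF : ∀ i, Continuous (F i)) :
    ∃ M, 0 ≤ M ∧ ∀ i, ∀ y ∈ K, |F i y| ≤ M := by
  obtain ⟨C, hC⟩ := hK.exists_bound_of_continuousOn (continuous_pi hF).continuousOn
  exact ⟨max C 0, le_max_right _ _, fun i y hy =>
    ((norm_le_pi_norm (fun i => F i y) i).trans (hC y hy)).trans (le_max_left _ _)⟩

theorem ContDiffBump.norm_smul_le {E F : Type*} [NormedAddCommGroup E] [NormedSpace ℝ E]
    [HasContDiffBump E] [NormedAddCommGroup F] [NormedSpace ℝ F] {c : E} (φ : ContDiffBump c)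
    {x : E} {w : F} {C : ℝ} (hC : 0 ≤ C) (h : x ∈ ball c φ.rOut → ‖w‖ ≤ C) :
    ‖φ x • w‖ ≤ C := by
  by_cases hx : x ∈ ball c φ.rOut
  · rw [norm_smul, Real.norm_of_nonneg φ.nonneg]
    exact (mul_le_of_le_one_left (norm_nonneg w) φ.le_one).trans (h hx)
  · rwa [φ.zero_of_le_dist (not_lt.1 hx), zero_smul, norm_zero]

theorem mem_closedBall_mk_mk_zero_iff {E F : Type*} [SeminormedAddCommGroup E]
    [SeminormedAddCommGroup F] {s t r : ℝ} {x : E} {q : E × F} :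
    (t, q) ∈ closedBall (s, (x, (0 : F))) r ↔ |t - s| ≤ r ∧ ‖q.1 - x‖ ≤ r ∧ ‖q.2‖ ≤ r := by
  rw [mem_closedBall, Prod.dist_eq, Prod.dist_eq, max_le_iff, max_le_iff, Real.dist_eq,
    dist_eq_norm, dist_zero_right]

section ODE

variable {E : Type*} [NormedAddCommGroup E] [NormedSpace ℝ E]

theorem exists_forall_mem_Ioo_hasDerivAt_of_contDiff_of_hasCompactSupport [CompleteSpace E]
    {f : ℝ → E → E} (hf : ContDiff ℝ 1 (Function.uncurry f))
    (hfc : HasCompactSupport (Function.uncurry f)) {a b t₀ : ℝ} (ht₀ : t₀ ∈ Icc a b) (x₀ : E) :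
    ∃ γ : ℝ → E, γ t₀ = x₀ ∧ ∀ t ∈ Ioo a b, HasDerivAt γ (f t (γ t)) t := by
  obtain ⟨K, hK⟩ := hf.lipschitzWith_of_hasCompactSupport hfc one_ne_zero
  obtain ⟨C, hC⟩ := hf.continuous.bounded_above_of_compact_support hfc
  have hC0 : 0 ≤ C := (norm_nonneg _).trans (hC (t₀, x₀))
  have hpl : IsPicardLindelof f ⟨t₀, ht₀⟩ x₀ (C * (b - a)).toNNReal 0 C.toNNReal K :=
    { lipschitzOnWith := fun t _ =>
        (mul_one K ▸ hK.comp (LipschitzWith.prodMk_left t)).lipschitzOnWith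
      continuousOn := fun x _ =>
        (hf.continuous.comp (continuous_id.prodMk continuous_const)).continuousOn
      norm_le := fun t _ x _ => by simpa [Real.coe_toNNReal _ hC0] using hC (t, x)
      mul_max_le := by
        simp only [Real.coe_toNNReal _ hC0, NNReal.coe_zero, sub_zero]
        refine (mul_le_mul_of_nonneg_left (max_le ?_ ?_) hC0).trans (Real.le_coe_toNNReal _) <;>
          linarith [ht₀.1, ht₀.2] }
  obtain ⟨γ, hγ₀, hγ⟩ := hpl.exists_eq_forall_mem_Icc_hasDerivWithinAt₀
  exact ⟨γ, hγ₀, fun t ht => (hγ t (Ioo_subset_Icc_self ht)).hasDerivAt (Icc_mem_nhds ht.1 ht.2)⟩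

theorem exists_forall_mem_Ioo_hasDerivAt_bump_smul [FiniteDimensional ℝ E] {v : ℝ → E → E}
    (hv : ContDiff ℝ 1 (Function.uncurry v)) {c : ℝ × E} (φ : ContDiffBump c) {a b t₀ : ℝ}
    (ht₀ : t₀ ∈ Icc a b) (x₀ : E) :
    ∃ γ : ℝ → E, γ t₀ = x₀ ∧ ∀ t ∈ Ioo a b, HasDerivAt γ (φ (t, γ t) • v t (γ t)) t :=
  exists_forall_mem_Ioo_hasDerivAt_of_contDiff_of_hasCompactSupport
    (f := fun t x => φ (t, x) • v t x) (φ.contDiff.smul hv) φ.hasCompactSupport.smul_right ht₀ x₀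

theorem norm_le_exp_mul_norm_of_norm_deriv_le_left {f f' : ℝ → E} {K a b : ℝ}
    (hf : ∀ t ∈ Icc a b, HasDerivAt f (f' t) t) (bound : ∀ t ∈ Icc a b, ‖f' t‖ ≤ K * ‖f t‖) :
    ∀ t ∈ Icc a b, ‖f t‖ ≤ Real.exp (K * (b - t)) * ‖f b‖ := by
  have hneg : ∀ s ∈ Icc (-b) (-a), HasDerivAt (fun s => f (-s)) (-f' (-s)) s := fun s hs => by
    have := (hf (-s) ⟨by linarith [hs.2], by linarith [hs.1]⟩).scomp s (hasDerivAt_neg s)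
    rwa [neg_one_smul] at this
  intro t ht
  have := norm_le_gronwallBound_of_norm_deriv_right_le (f := fun s => f (-s)) (ε := 0)
    (fun s hs => (hneg s hs).continuousAt.continuousWithinAt)
    (fun s hs => (hneg s (Ico_subset_Icc_self hs)).hasDerivWithinAt) le_rfl
    (fun s hs => by simpa [norm_neg] using bound (-s) ⟨by linarith [hs.2], by linarith [hs.1]⟩)
    (-t) ⟨by linarith [ht.2], by linarith [ht.1]⟩
  rwa [gronwallBound_ε0, neg_neg, neg_sub_neg, mul_comm, neg_neg] at this

theorem norm_fst_sub_le_of_deriv_le_mul_norm_snd {F : Type*} [NormedAddCommGroup F]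
    [NormedSpace ℝ F] {γ γ' : ℝ → E × F} {α K a b : ℝ} (hα : 0 ≤ α) (hK : 0 ≤ K)
    (hγ : ∀ t ∈ Icc a b, HasDerivAt γ (γ' t) t)
    (hfst : ∀ t ∈ Icc a b, ‖(γ' t).1‖ ≤ α * ‖(γ t).2‖)
    (hsnd : ∀ t ∈ Icc a b, ‖(γ' t).2‖ ≤ K * ‖(γ t).2‖) :
    ∀ t ∈ Icc a b, ‖(γ t).1 - (γ b).1‖ ≤ α * Real.exp (K * (b - a)) * ‖(γ b).2‖ * (b - t) := by
  intro t ht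
  have hsnd_le : ∀ s ∈ Icc a b, ‖(γ s).2‖ ≤ Real.exp (K * (b - a)) * ‖(γ b).2‖ := fun s hs =>
    (norm_le_exp_mul_norm_of_norm_deriv_le_left
      (fun s hs => hasFDerivAt_snd.comp_hasDerivAt s (hγ s hs)) hsnd s hs).trans
      (mul_le_mul_of_nonneg_right (Real.exp_le_exp.2 (mul_le_mul_of_nonneg_left
        (by linarith [hs.1]) hK)) (norm_nonneg _))
  have hsub : ∀ s ∈ Icc t b, s ∈ Icc a b := fun s hs => ⟨ht.1.trans hs.1, hs.2⟩
  calc ‖(γ t).1 - (γ b).1‖ = ‖(γ b).1 - (γ t).1‖ := norm_sub_rev _ _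
    _ ≤ α * Real.exp (K * (b - a)) * ‖(γ b).2‖ * ‖b - t‖ :=
      (convex_Icc t b).norm_image_sub_le_of_norm_hasDerivWithin_le
        (fun s hs => (hasFDerivAt_fst.comp_hasDerivAt s (hγ s (hsub s hs))).hasDerivWithinAt)
        (fun s hs => (hfst s (hsub s hs)).trans
          (by rw [mul_assoc]; gcongr; exact hsnd_le s (hsub s hs)))
        ⟨le_rfl, ht.2⟩ ⟨ht.2, le_rfl⟩
    _ = α * Real.exp (K * (b - a)) * ‖(γ b).2‖ * (b - t) := by
      rw [Real.norm_of_nonneg (sub_nonneg.2 ht.2)]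

end ODE

section EulerField

variable {n d : ℕ} {A : Fin d → Fin n → Pt n d → ℝ} {B : Fin d → Fin d → Fin d → Pt n d → ℝ}

theorem contDiff_uncurry_XfieldAB {m : WithTop ℕ∞} (hA : ∀ i j, ContDiff ℝ m (A i j))
    (hB : ∀ i j k, ContDiff ℝ m (B i j k)) :
    ContDiff ℝ m (Function.uncurry (XfieldAB n d A B)) := by
  unfold XfieldAB Function.uncurry
  fun_prop

theorem norm_XfieldAB_fst_le {l M : ℝ} {p : Pt n d} (hM : 0 ≤ M)
    (hA : ∀ i j, |A i j (p.1, l • p.2)| ≤ M) :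
    ‖(XfieldAB n d A B l p).1‖ ≤ d * M * ‖p.2‖ := by
  refine (pi_norm_le_iff_of_nonneg (by positivity)).2 fun j => ?_
  calc ‖-(∑ i, p.2 i * A i j (p.1, l • p.2))‖ ≤ ∑ i, ‖p.2 i * A i j (p.1, l • p.2)‖ := by
        rw [norm_neg]; exact norm_sum_le _ _
    _ ≤ ∑ _i : Fin d, ‖p.2‖ * M := Finset.sum_le_sum fun i _ => by
        rw [norm_mul]
        exact mul_le_mul (norm_le_pi_norm _ i) (hA i j) (norm_nonneg _) (norm_nonneg _)
    _ = d * M * ‖p.2‖ := by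
        simp only [Finset.sum_const, Finset.card_univ, Fintype.card_fin, nsmul_eq_mul]; ring

theorem norm_XfieldAB_snd_le {l M : ℝ} {p : Pt n d} (hM : 0 ≤ M)
    (hB : ∀ i j k, |B i j k (p.1, l • p.2)| ≤ M) :
    ‖(XfieldAB n d A B l p).2‖ ≤ d * d * M * ‖p.2‖ ^ 2 := by
  refine (pi_norm_le_iff_of_nonneg (by positivity)).2 fun k => ?_
  calc ‖-(∑ i, ∑ j, p.2 i * p.2 j * B i j k (p.1, l • p.2))‖
      ≤ ∑ i, ∑ j, ‖p.2 i * p.2 j * B i j k (p.1, l • p.2)‖ := by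
        rw [norm_neg]
        exact (norm_sum_le _ _).trans (Finset.sum_le_sum fun i _ => norm_sum_le _ _)
    _ ≤ ∑ _i : Fin d, ∑ _j : Fin d, ‖p.2‖ * ‖p.2‖ * M :=
        Finset.sum_le_sum fun i _ => Finset.sum_le_sum fun j _ => by
          rw [norm_mul, norm_mul]
          exact mul_le_mul (mul_le_mul (norm_le_pi_norm _ i) (norm_le_pi_norm _ j)
            (norm_nonneg _) (norm_nonneg _)) (hB i j k) (norm_nonneg _) (by positivity)
    _ = d * d * M * ‖p.2‖ ^ 2 := by
        simp only [Finset.sum_const, Finset.card_univ, Fintype.card_fin, nsmul_eq_mul]; ring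

theorem exists_bound_XfieldAB_coeff (hA : ∀ i j, Continuous (A i j))
    (hB : ∀ i j k, Continuous (B i j k)) {K : Set (ℝ × Pt n d)} (hK : IsCompact K) :
    ∃ M, 0 ≤ M ∧ (∀ z ∈ K, ∀ i j, |A i j (z.2.1, z.1 • z.2.2)| ≤ M) ∧
      ∀ z ∈ K, ∀ i j k, |B i j k (z.2.1, z.1 • z.2.2)| ≤ M := by
  have hσ : Continuous fun z : ℝ × Pt n d => ((z.2.1, z.1 • z.2.2) : Pt n d) := by fun_prop
  obtain ⟨MA, hMA0, hMA⟩ := hK.exists_forall_abs_le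
    (F := fun (ij : Fin d × Fin n) z => A ij.1 ij.2 (z.2.1, z.1 • z.2.2)) fun _ => (hA _ _).comp hσ
  obtain ⟨MB, -, hMB⟩ := hK.exists_forall_abs_le
    (F := fun (ijk : Fin d × Fin d × Fin d) z => B ijk.1 ijk.2.1 ijk.2.2 (z.2.1, z.1 • z.2.2))
    fun _ => (hB _ _ _).comp hσ
  exact ⟨max MA MB, hMA0.trans (le_max_left _ _),
    fun z hz i j => (hMA (i, j) z hz).trans (le_max_left _ _),
    fun z hz i j k => (hMB (i, j, k) z hz).trans (le_max_right _ _)⟩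

theorem norm_bump_smul_XfieldAB_fst_le {c : ℝ × Pt n d} (φ : ContDiffBump c) {M : ℝ}
    (hM : 0 ≤ M) (hA : ∀ z ∈ ball c φ.rOut, ∀ i j, |A i j (z.2.1, z.1 • z.2.2)| ≤ M)
    (t : ℝ) (q : Pt n d) :
    ‖(φ (t, q) • XfieldAB n d A B t q).1‖ ≤ d * M * ‖q.2‖ := by
  rw [Prod.smul_fst]
  exact φ.norm_smul_le (by positivity) fun hz => norm_XfieldAB_fst_le hM (hA _ hz)

theorem norm_bump_smul_XfieldAB_snd_le {c : ℝ × Pt n d} (φ : ContDiffBump c) (hc : c.2.2 = 0)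
    {M : ℝ} (hM : 0 ≤ M) (hB : ∀ z ∈ ball c φ.rOut, ∀ i j k, |B i j k (z.2.1, z.1 • z.2.2)| ≤ M)
    (t : ℝ) (q : Pt n d) :
    ‖(φ (t, q) • XfieldAB n d A B t q).2‖ ≤ φ.rOut * (d * d * M) * ‖q.2‖ := by
  rw [Prod.smul_snd]
  refine φ.norm_smul_le (mul_nonneg (by positivity [φ.rOut_pos]) (norm_nonneg _)) fun hz => ?_
  have hq : ‖q.2‖ ≤ φ.rOut :=
    calc ‖q.2‖ = dist q.2 c.2.2 := by rw [hc, dist_zero_right]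
      _ ≤ dist (t, q) c := (le_max_right _ _).trans (le_max_right _ _)
      _ ≤ φ.rOut := (mem_ball.1 hz).le
  calc ‖(XfieldAB n d A B t q).2‖ ≤ d * d * M * ‖q.2‖ ^ 2 := norm_XfieldAB_snd_le hM (hB _ hz)
    _ ≤ d * d * M * ‖q.2‖ * φ.rOut := by rw [sq, ← mul_assoc]; gcongr
    _ = φ.rOut * (d * d * M) * ‖q.2‖ := by ring

theorem exists_bump_smul_XfieldAB_solution (hA : ∀ i j, ContDiff ℝ 1 (A i j))
    (hB : ∀ i j k, ContDiff ℝ 1 (B i j k)) {c : ℝ × Pt n d} (φ : ContDiffBump c)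
    (hc : c.2.2 = 0) {M : ℝ} (hM : 0 ≤ M)
    (hMA : ∀ z ∈ ball c φ.rOut, ∀ i j, |A i j (z.2.1, z.1 • z.2.2)| ≤ M)
    (hMB : ∀ z ∈ ball c φ.rOut, ∀ i j k, |B i j k (z.2.1, z.1 • z.2.2)| ≤ M) (p : Pt n d) :
    ∃ γ : ℝ → Pt n d, γ 1 = p ∧ ∀ t ∈ Icc (0 : ℝ) 1,
      HasDerivAt γ (φ (t, γ t) • XfieldAB n d A B t (γ t)) t ∧
      ‖(γ t).2‖ ≤ Real.exp ((1 - t) * φ.rOut * (d * d * M)) * ‖p.2‖ ∧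
      ‖(γ t).1 - p.1‖ ≤ d * M * (Real.exp (φ.rOut * (d * d * M)) * ‖p.2‖) := by
  obtain ⟨γ, hγ1, hγ⟩ := exists_forall_mem_Ioo_hasDerivAt_bump_smul
    (contDiff_uncurry_XfieldAB hA hB) φ (a := -1) (b := 2) (t₀ := 1) (by norm_num) p
  have hγ' : ∀ t ∈ Icc (0 : ℝ) 1, HasDerivAt γ (φ (t, γ t) • XfieldAB n d A B t (γ t)) t :=
    fun t ht => hγ t ⟨by linarith [ht.1], by linarith [ht.2]⟩
  have hsnd := norm_bump_smul_XfieldAB_snd_le (A := A) φ hc hM hMB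
  have hgron := norm_le_exp_mul_norm_of_norm_deriv_le_left
    (fun t ht => hasFDerivAt_snd.comp_hasDerivAt t (hγ' t ht)) (fun t _ => hsnd t (γ t))
  have hdrift := norm_fst_sub_le_of_deriv_le_mul_norm_snd (by positivity)
    (by positivity [φ.rOut_pos]) hγ' (fun t _ => norm_bump_smul_XfieldAB_fst_le φ hM hMA t (γ t))
    (fun t _ => hsnd t (γ t))
  refine ⟨γ, hγ1, fun t ht => ⟨hγ' t ht, ?_, ?_⟩⟩
  · exact (hgron t ht).trans_eq (by rw [Function.comp_apply, hγ1]; ring_nf)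
  · refine (hγ1 ▸ hdrift t ht).trans ?_
    rw [sub_zero, mul_one, mul_assoc (d * M : ℝ)]
    exact mul_le_of_le_one_right (by positivity) (by linarith [ht.1])

end EulerField

/-- Gronwall bound for the conjugating flow between Euler vector fields: near any point of
`I`, the solution of `dΦ/dλ = X(λ, Φ(λ))`, `Φ(1) = Id`, exists on all of `[0,1]` with the
`h`-component bounded by `e^{(1−λ)ε₁ b}|h(1)|`. -/
theorem stmt19 (n d : ℕ) (A : Fin d → Fin n → Pt n d → ℝ)
    (B : Fin d → Fin d → Fin d → Pt n d → ℝ)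
    (hA : ∀ i j, ContDiff ℝ (⊤ : ℕ∞) (A i j))
    (hB : ∀ i j k, ContDiff ℝ (⊤ : ℕ∞) (B i j k))
    (x₀ : Fin n → ℝ) :
    ∃ ε₁ > (0:ℝ), ∃ ε₂ > (0:ℝ), ∃ b : ℝ, 0 ≤ b ∧ ε₂ ≤ ε₁ ∧
      (∀ l ∈ Set.Icc (0:ℝ) 1, ∀ p : Pt n d, ‖p.1 - x₀‖ ≤ 1 → ‖p.2‖ ≤ ε₁ →
        ‖(XfieldAB n d A B l p).2‖ ≤ b * ‖p.2‖ ^ 2) ∧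
      ∀ p : Pt n d, ‖p.1 - x₀‖ ≤ ε₂ → ‖p.2‖ ≤ ε₂ →
        ∃ γ : ℝ → Pt n d, γ 1 = p ∧
          (∀ l ∈ Set.Icc (0:ℝ) 1, HasDerivAt γ (XfieldAB n d A B l (γ l)) l) ∧
          ∀ l ∈ Set.Icc (0:ℝ) 1, ‖(γ l).2‖ ≤ Real.exp ((1 - l) * ε₁ * b) * ‖p.2‖ := by
  set c : ℝ × Pt n d := (1 / 2, (x₀, 0))
  let φ : ContDiffBump c := ⟨1, 2, one_pos, one_lt_two⟩
  obtain ⟨M, hM0, hMA, hMB⟩ := exists_bound_XfieldAB_coeff (fun i j => (hA i j).continuous)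
    (fun i j k => (hB i j k).continuous) (isCompact_closedBall c 2)
  set b : ℝ := d * d * M
  -- `η` bounds `|h|` along the flow; `η + d M η = 1` keeps the drift of `x` within the unit box.
  set η : ℝ := (1 + d * M)⁻¹
  have hη : η + d * M * η = 1 := by simp only [η]; field_simp
  have hη1 : η ≤ 1 := inv_le_one_of_one_le₀ (by simp only [le_add_iff_nonneg_right]; positivity)
  have hE : 1 ≤ Real.exp (2 * b) := Real.one_le_exp (by positivity)
  refine ⟨2, two_pos, η / Real.exp (2 * b), by positivity, b, by positivity,
    (div_le_self (by positivity) hE).trans (hη1.trans one_le_two), ?_, fun p hp1 hp2 => ?_⟩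
  · intro l hl p _ hp2
    refine norm_XfieldAB_snd_le hM0 (hMB (l, p) (mem_closedBall_mk_mk_zero_iff.2 ?_))
    exact ⟨abs_le.2 ⟨by linarith [hl.1], by linarith [hl.2]⟩, by linarith, hp2⟩
  have hpE : Real.exp (2 * b) * ‖p.2‖ ≤ η := by rwa [le_div_iff₀' (by positivity)] at hp2
  obtain ⟨γ, hγ1, hγ⟩ := exists_bump_smul_XfieldAB_solution
    (fun i j => (hA i j).of_le (by exact_mod_cast le_top))
    (fun i j k => (hB i j k).of_le (by exact_mod_cast le_top)) φ rfl hM0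
    (fun z hz => hMA z (ball_subset_closedBall hz))
    (fun z hz => hMB z (ball_subset_closedBall hz)) p
  have hbox : ∀ t ∈ Icc (0 : ℝ) 1, (t, γ t) ∈ closedBall c φ.rIn := fun t ht => by
    obtain ⟨-, hsnd, hdrift⟩ := hγ t ht
    refine mem_closedBall_mk_mk_zero_iff.2
      ⟨abs_le.2 ⟨by linarith [ht.1], by linarith [ht.2]⟩, ?_, ?_⟩
    · calc ‖(γ t).1 - x₀‖ ≤ ‖(γ t).1 - p.1‖ + ‖p.1 - x₀‖ :=
          norm_sub_le_norm_sub_add_norm_sub _ _ _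
        _ ≤ d * M * η + η := add_le_add (hdrift.trans (by gcongr))
            (hp1.trans (div_le_self (by positivity) hE))
        _ = 1 := by linarith
    · calc ‖(γ t).2‖ ≤ Real.exp ((1 - t) * 2 * b) * ‖p.2‖ := hsnd
        _ ≤ Real.exp (2 * b) * ‖p.2‖ := by
          gcongr Real.exp ?_ * _
          nlinarith [mul_nonneg ht.1 (show (0 : ℝ) ≤ b by positivity)]
        _ ≤ 1 := hpE.trans hη1
  refine ⟨γ, hγ1, fun l hl => ?_, fun l hl => (hγ l hl).2.1⟩
  simpa only [φ.one_of_mem_closedBall (hbox l hl), one_smul] using (hγ l hl).1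
end
end
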